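/- arXiv:2002.12559 — 6 statements merged into one kernel-verified Lean document; each statement's English description precedes it below -/
import Mathlib

section
/- Let 0 ≤ δ ≤ 1 and B, C > 0. Suppose that M_{n,δ}(B,C) is nonempty for all sufficiently large n. Then: if 0 ≤ δ < 1, one has C ≤ 1 and BC ≤ 1; and if δ = 1, one has C ≤ 2 and BC ≤ 2. -/
open Finset Filter

/-- The set of `(⌊n^δ⌋ + n) × (⌊n^δ⌋ + n)` binary contingency tables whose first `⌊n^δ⌋`
row and column sums equal `⌊BCn⌋` and whose remaining `n` row and column sums equal `⌊Cn⌋`. -/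
noncomputable def BCT (n : ℕ) (δ B C : ℝ) :
    Finset (Fin (⌊(n : ℝ) ^ δ⌋₊ + n) → Fin (⌊(n : ℝ) ^ δ⌋₊ + n) → Fin 2) :=
  Finset.univ.filter (fun A =>
    (∀ i : Fin (⌊(n : ℝ) ^ δ⌋₊ + n), (i.1 < ⌊(n : ℝ) ^ δ⌋₊ → ∑ j, (A i j : ℕ) = ⌊B * C * (n : ℝ)⌋₊) ∧
      (⌊(n : ℝ) ^ δ⌋₊ ≤ i.1 → ∑ j, (A i j : ℕ) = ⌊C * (n : ℝ)⌋₊)) ∧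
    (∀ j : Fin (⌊(n : ℝ) ^ δ⌋₊ + n), (j.1 < ⌊(n : ℝ) ^ δ⌋₊ → ∑ i, (A i j : ℕ) = ⌊B * C * (n : ℝ)⌋₊) ∧
      (⌊(n : ℝ) ^ δ⌋₊ ≤ j.1 → ∑ i, (A i j : ℕ) = ⌊C * (n : ℝ)⌋₊)))

/-- Entry of a square `Fin 2`-matrix at 0-based natural indices, with junk value `0`
out of range. -/
def ent {N : ℕ} (A : Fin N → Fin N → Fin 2) (a b : ℕ) : ℕ :=
  if h : a < N ∧ b < N then (A ⟨a, h.1⟩ ⟨b, h.2⟩ : ℕ) else 0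

/-- Probability that entry `(a, b)` of a uniform sample from `BCT n δ B C` equals `v`. -/
noncomputable def entryProb (n : ℕ) (δ B C : ℝ) (a b v : ℕ) : ℝ :=
  (((BCT n δ B C).filter (fun A => ent A a b = v)).card : ℝ) / ((BCT n δ B C).card : ℝ)

/-- Total variation distance between entry `(a, b)` of a uniform sample from `BCT n δ B C`
and a Bernoulli random variable with mean `q` (both are supported on `{0, 1}`). -/
noncomputable def dTVBer (n : ℕ) (δ B C : ℝ) (a b : ℕ) (q : ℝ) : ℝ :=
  |entryProb n δ B C a b 0 - (1 - q)| + |entryProb n δ B C a b 1 - q|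


lemma aux_analytic (δ D : ℝ) (m : ℕ)
    (h : ∀ n : ℕ, m ≤ n → (⌊D * n⌋₊ : ℝ) ≤ (n : ℝ) ^ δ + n) :
    (δ < 1 → D ≤ 1) ∧ (δ = 1 → D ≤ 2) := by
  have key : ∀ᶠ n : ℕ in atTop, D * n < (n : ℝ) ^ δ + n + 1 := by
    filter_upwards [eventually_ge_atTop m] with n hn
    have h1 : D * n - 1 < (⌊D * n⌋₊ : ℝ) := Nat.sub_one_lt_floor _
    have h2 := h n hn
    linarith
  constructor
  · intro hδ
    have h2 : ∀ᶠ n : ℕ in atTop, D ≤ (n : ℝ) ^ (δ - 1) + 1 + 1 / n := by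
      filter_upwards [key, eventually_gt_atTop 0] with n h1 hn
      have hn' : (0 : ℝ) < n := by exact_mod_cast hn
      have heq : (n : ℝ) ^ (δ - 1) = (n : ℝ) ^ δ / n := by
        rw [Real.rpow_sub_one (ne_of_gt hn')]
      rw [heq]
      rw [div_add' _ _ _ (ne_of_gt hn'), ← add_div, le_div_iff₀ hn']
      nlinarith
    have hT : Filter.Tendsto (fun n : ℕ => (n : ℝ) ^ (δ - 1) + 1 + 1 / n) atTop
        (nhds (0 + 1 + 0)) := by
      refine Filter.Tendsto.add (Filter.Tendsto.add ?_ tendsto_const_nhds)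
        tendsto_one_div_atTop_nhds_zero_nat
      have : δ - 1 = -(1 - δ) := by ring
      rw [this]
      exact (tendsto_rpow_neg_atTop (by linarith)).comp tendsto_natCast_atTop_atTop
    have := ge_of_tendsto hT h2
    linarith
  · intro hδ
    subst hδ
    have h2 : ∀ᶠ n : ℕ in atTop, D ≤ 2 + 1 / n := by
      filter_upwards [key, eventually_gt_atTop 0] with n h1 hn
      have hn' : (0 : ℝ) < n := by exact_mod_cast hn
      rw [Real.rpow_one] at h1
      have h2 : 2 + 1 / (n:ℝ) = (2 * n + 1) / n := by field_simp
      rw [h2, le_div_iff₀ hn']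
      linarith
    have hT : Filter.Tendsto (fun n : ℕ => 2 + 1 / (n : ℝ)) atTop (nhds (2 + 0)) :=
      Filter.Tendsto.add tendsto_const_nhds tendsto_one_div_atTop_nhds_zero_nat
    have := ge_of_tendsto hT h2
    linarith

lemma sums_le (n : ℕ) (δ B C : ℝ) (hn : 1 ≤ n) (hδ0 : 0 ≤ δ)
    (hne : (BCT n δ B C).Nonempty) :
    ⌊C * (n : ℝ)⌋₊ ≤ ⌊(n : ℝ) ^ δ⌋₊ + n ∧ ⌊B * C * (n : ℝ)⌋₊ ≤ ⌊(n : ℝ) ^ δ⌋₊ + n := by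
  obtain ⟨A, hA⟩ := hne
  rw [BCT, mem_filter] at hA
  obtain ⟨-, hrow, -⟩ := hA
  have hsum : ∀ i, ∑ j, (A i j : ℕ) ≤ ⌊(n : ℝ) ^ δ⌋₊ + n := by
    intro i
    calc ∑ j, (A i j : ℕ) ≤ ∑ _j : Fin (⌊(n : ℝ) ^ δ⌋₊ + n), 1 :=
          Finset.sum_le_sum (fun j _ => Fin.is_le _)
      _ = ⌊(n : ℝ) ^ δ⌋₊ + n := by simp
  have hK : 1 ≤ ⌊(n : ℝ) ^ δ⌋₊ := by
    rw [Nat.one_le_iff_ne_zero, Ne, Nat.floor_eq_zero, not_lt]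
    exact Real.one_le_rpow (by exact_mod_cast hn) hδ0
  constructor
  · have h := (hrow ⟨⌊(n : ℝ) ^ δ⌋₊, by omega⟩).2 (le_refl _)
    rw [← h]; exact hsum _
  · have h := (hrow ⟨0, by omega⟩).1 hK
    rw [← h]; exact hsum _

/-- Lemma 1.1 (preliminary analysis): the natural bounds on `B` and `C` forced by
nonemptiness of the tables as `n → ∞`. -/
theorem parameter_bounds (δ B C : ℝ) (hδ0 : 0 ≤ δ) (hδ1 : δ ≤ 1) (hB : 0 < B) (hC : 0 < C)
    (hne : ∃ n₀ : ℕ, ∀ n : ℕ, n₀ ≤ n → (BCT n δ B C).Nonempty) :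
    (δ < 1 → C ≤ 1 ∧ B * C ≤ 1) ∧ (δ = 1 → C ≤ 2 ∧ B * C ≤ 2) := by
  obtain ⟨n₀, hn₀⟩ := hne
  have hreal : ∀ D : ℝ, (∀ n : ℕ, max n₀ 1 ≤ n → ⌊D * (n : ℝ)⌋₊ ≤ ⌊(n : ℝ) ^ δ⌋₊ + n) →
      (δ < 1 → D ≤ 1) ∧ (δ = 1 → D ≤ 2) := by
    intro D hD
    refine aux_analytic δ D (max n₀ 1) (fun n hn => ?_)
    have h1 := hD n hn
    have h2 : (⌊(n : ℝ) ^ δ⌋₊ : ℝ) ≤ (n : ℝ) ^ δ := Nat.floor_le (by positivity)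
    calc (⌊D * (n : ℝ)⌋₊ : ℝ) ≤ ((⌊(n : ℝ) ^ δ⌋₊ + n : ℕ) : ℝ) := by exact_mod_cast h1
      _ ≤ (n : ℝ) ^ δ + n := by push_cast; linarith
  have hC' : ∀ n : ℕ, max n₀ 1 ≤ n → ⌊C * (n : ℝ)⌋₊ ≤ ⌊(n : ℝ) ^ δ⌋₊ + n :=
    fun n hn => (sums_le n δ B C (le_trans (le_max_right _ _) hn) hδ0
      (hn₀ n (le_trans (le_max_left _ _) hn))).1
  have hBC' : ∀ n : ℕ, max n₀ 1 ≤ n → ⌊B * C * (n : ℝ)⌋₊ ≤ ⌊(n : ℝ) ^ δ⌋₊ + n :=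
    fun n hn => (sums_le n δ B C (le_trans (le_max_right _ _) hn) hδ0
      (hn₀ n (le_trans (le_max_left _ _) hn))).2
  have r1 := hreal C hC'
  have r2 := hreal (B * C) hBC'
  exact ⟨fun h => ⟨r1.1 h, r2.1 h⟩, fun h => ⟨r1.2 h, r2.2 h⟩⟩
end

section
/- Let 0 < δ < 1, 0 < C < 3/4 and 0 < B < 1/(√(C/3 − C²/3) + C), and suppose M_{n,δ}(B,C) is nonempty for all sufficiently large n. Let X^{(n)} be uniformly distributed on M_{n,δ}(B,C). Then for every ε > 0 there exist K > 0 and n₀ such that for all n ≥ n₀, both d_TV(X^{(n)}_{1, ⌊n^δ⌋+1}, Ber(BC)) ≤ K (n^{δ−1} + n^{−δ/2+ε}) and d_TV(X^{(n)}_{⌊n^δ⌋+1, 1}, Ber(BC)) ≤ K (n^{δ−1} + n^{−δ/2+ε}). -/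
open Finset Filter

section Aux

variable {n : ℕ} {δ B C : ℝ}

lemma swap_mem_BCT {j j' : Fin (⌊(n : ℝ) ^ δ⌋₊ + n)}
    (hj : ⌊(n : ℝ) ^ δ⌋₊ ≤ j.1) (hj' : ⌊(n : ℝ) ^ δ⌋₊ ≤ j'.1)
    {A : Fin (⌊(n : ℝ) ^ δ⌋₊ + n) → Fin (⌊(n : ℝ) ^ δ⌋₊ + n) → Fin 2}
    (hA : A ∈ BCT n δ B C) :
    (fun i k => A i (Equiv.swap j j' k)) ∈ BCT n δ B C := by
  simp only [BCT, mem_filter, mem_univ, true_and] at hA ⊢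
  obtain ⟨hrow, hcol⟩ := hA
  have key : ∀ k : Fin (⌊(n : ℝ) ^ δ⌋₊ + n),
      ((Equiv.swap j j' k).1 < ⌊(n : ℝ) ^ δ⌋₊ ↔ k.1 < ⌊(n : ℝ) ^ δ⌋₊) := by
    intro k
    rcases eq_or_ne k j with rfl | h1
    · rw [Equiv.swap_apply_left]; omega
    rcases eq_or_ne k j' with rfl | h2
    · rw [Equiv.swap_apply_right]; omega
    · rw [Equiv.swap_apply_of_ne_of_ne h1 h2]
  constructor
  · intro i
    have hs : ∑ k, ((A i (Equiv.swap j j' k)) : ℕ) = ∑ k, (A i k : ℕ) :=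
      Equiv.sum_comp (Equiv.swap j j') (fun k => (A i k : ℕ))
    exact ⟨fun h => hs.trans ((hrow i).1 h), fun h => hs.trans ((hrow i).2 h)⟩
  · intro k
    refine ⟨fun h => (hcol _).1 ?_, fun h => (hcol _).2 ?_⟩
    · have := key k; omega
    · have := key k; omega

lemma card_filter_swap (i0 : Fin (⌊(n : ℝ) ^ δ⌋₊ + n)) {j j' : Fin (⌊(n : ℝ) ^ δ⌋₊ + n)}
    (hj : ⌊(n : ℝ) ^ δ⌋₊ ≤ j.1) (hj' : ⌊(n : ℝ) ^ δ⌋₊ ≤ j'.1) (v : ℕ) :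
    ((BCT n δ B C).filter (fun A => (A i0 j : ℕ) = v)).card =
    ((BCT n δ B C).filter (fun A => (A i0 j' : ℕ) = v)).card := by
  refine Finset.card_bij' (fun A _ => fun i k => A i (Equiv.swap j j' k))
    (fun A _ => fun i k => A i (Equiv.swap j j' k)) ?_ ?_ ?_ ?_
  · intro A hA
    rw [mem_filter] at hA ⊢
    refine ⟨swap_mem_BCT hj hj' hA.1, ?_⟩
    simpa [Equiv.swap_apply_right] using hA.2
  · intro A hA
    rw [mem_filter] at hA ⊢
    refine ⟨swap_mem_BCT hj hj' hA.1, ?_⟩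
    simpa [Equiv.swap_apply_left] using hA.2
  · intro A hA; funext i k; simp
  · intro A hA; funext i k; simp

end Aux

open Finset Filter

variable {n : ℕ} {δ B C : ℝ}

lemma transpose_mem_BCT {A : Fin (⌊(n : ℝ) ^ δ⌋₊ + n) → Fin (⌊(n : ℝ) ^ δ⌋₊ + n) → Fin 2}
    (hA : A ∈ BCT n δ B C) : (fun i j => A j i) ∈ BCT n δ B C := by
  simp only [BCT, mem_filter, mem_univ, true_and] at hA ⊢
  exact ⟨hA.2, hA.1⟩

lemma ent_transpose {N : ℕ} (A : Fin N → Fin N → Fin 2) (a b : ℕ) :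
    ent (fun i j => A j i) b a = ent A a b := by
  unfold ent
  by_cases h : a < N ∧ b < N
  · rw [dif_pos ⟨h.2, h.1⟩, dif_pos h]
  · rw [dif_neg (by tauto), dif_neg h]

lemma entryProb_transpose (a b v : ℕ) :
    entryProb n δ B C b a v = entryProb n δ B C a b v := by
  unfold entryProb
  congr 1
  norm_cast
  refine Finset.card_bij' (fun A _ => fun i j => A j i) (fun A _ => fun i j => A j i)
    ?_ ?_ ?_ ?_
  · intro A hA
    rw [mem_filter] at hA ⊢
    exact ⟨transpose_mem_BCT hA.1, (ent_transpose A b a).trans hA.2⟩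
  · intro A hA
    rw [mem_filter] at hA ⊢
    exact ⟨transpose_mem_BCT hA.1, (ent_transpose A a b).trans hA.2⟩
  · intro A hA; funext i k; simp
  · intro A hA; funext i k; simp
variable {n : ℕ} {δ B C : ℝ}

lemma fin2_val (v : Fin 2) : (v : ℕ) = if (v : ℕ) = 1 then 1 else 0 := by
  fin_cases v <;> simp

lemma entryProb_one_bound (hT : (BCT n δ B C).Nonempty) (hn1 : 1 ≤ n)
    (hm : 0 < ⌊(n:ℝ)^δ⌋₊) (hBC : 0 ≤ B * C) :
    |entryProb n δ B C 0 ⌊(n:ℝ)^δ⌋₊ 1 - B * C| ≤ ((⌊(n:ℝ)^δ⌋₊ : ℝ) + 1) / n := by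
  set m := ⌊(n:ℝ)^δ⌋₊ with hmdef
  set r := ⌊B * C * (n:ℝ)⌋₊ with hrdef
  have hNm : m < m + n := by omega
  have h0N : 0 < m + n := by omega
  set T := BCT n δ B C with hTdef
  set i0 : Fin (m + n) := ⟨0, h0N⟩ with hi0
  set J : Fin (m + n) := ⟨m, hNm⟩ with hJ
  set f : Fin (m + n) → ℕ := fun j => (T.filter (fun A => (A i0 j : ℕ) = 1)).card with hfdef
  have hent : ∀ A : Fin (m+n) → Fin (m+n) → Fin 2, ent A 0 m = (A i0 J : ℕ) := by
    intro A; unfold ent; rw [dif_pos ⟨h0N, hNm⟩]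
  have hEP : entryProb n δ B C 0 m 1 = (f J : ℝ) / (T.card : ℝ) := by
    unfold entryProb
    rw [← hTdef]
    have hfiltereq : (T.filter (fun A => ent A 0 m = 1))
        = T.filter (fun A => ((A i0 J : ℕ) = 1)) :=
      Finset.filter_congr fun A _ => iff_of_eq (by rw [hent A])
    rw [hfiltereq]
  have hrow : ∀ A ∈ T, ∑ j, (A i0 j : ℕ) = r := by
    intro A hA
    exact ((Finset.mem_filter.mp hA).2.1 i0).1 hm
  have hgf : ∀ j, (∑ A ∈ T, (A i0 j : ℕ)) = f j := by
    intro j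
    have hfj : f j = ((T.filter (fun A => (A i0 j : ℕ) = 1)).card) := rfl
    rw [hfj, Finset.card_filter]
    exact Finset.sum_congr rfl fun A _ => fin2_val (A i0 j)
  have htot : ∑ j, f j = T.card * r := by
    calc ∑ j, f j = ∑ j, ∑ A ∈ T, (A i0 j : ℕ) :=
          Finset.sum_congr rfl fun j _ => (hgf j).symm
      _ = ∑ A ∈ T, ∑ j, (A i0 j : ℕ) := Finset.sum_comm
      _ = ∑ A ∈ T, r := Finset.sum_congr rfl hrow
      _ = T.card * r := by rw [Finset.sum_const, smul_eq_mul]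
  have hsplit := Finset.sum_filter_add_sum_filter_not Finset.univ
    (fun j : Fin (m+n) => (j:ℕ) < m) f
  have hcardP : (Finset.univ.filter fun j : Fin (m+n) => (j:ℕ) < m).card = m := by
    rw [Finset.card_filter,
      Fin.sum_univ_eq_sum_range (fun j => if j < m then (1:ℕ) else 0),
      ← Finset.card_filter]
    have he : (Finset.range (m+n)).filter (fun i => i < m) = Finset.range m := by
      ext i; simp only [Finset.mem_filter, Finset.mem_range]; omega
    rw [he, Finset.card_range]
  have hbig : ∑ j ∈ Finset.univ.filter (fun j : Fin (m+n) => ¬ (j:ℕ) < m), f j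
      = n * f J := by
    have hconst : ∀ j ∈ Finset.univ.filter (fun j : Fin (m+n) => ¬ (j:ℕ) < m), f j = f J := by
      intro j hj
      simp only [Finset.mem_filter] at hj
      exact card_filter_swap i0 (le_of_not_gt hj.2) (le_refl m) 1
    rw [Finset.sum_congr rfl hconst, Finset.sum_const, smul_eq_mul]
    congr 1
    have h2 := Finset.card_filter_add_card_filter_not (s := Finset.univ)
      (p := fun j : Fin (m+n) => (j:ℕ) < m)
    rw [Finset.card_univ, Fintype.card_fin] at h2
    omega
  set S := ∑ j ∈ Finset.univ.filter (fun j : Fin (m+n) => (j:ℕ) < m), f j with hSdef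
  have hSle : S ≤ m * T.card := by
    calc S ≤ ∑ _j ∈ Finset.univ.filter (fun j : Fin (m+n) => (j:ℕ) < m), T.card :=
        Finset.sum_le_sum fun j _ => Finset.card_filter_le _ _
      _ = m * T.card := by rw [Finset.sum_const, smul_eq_mul, hcardP]
  have hkey : T.card * r = S + n * f J := by
    rw [← htot, ← hsplit, hbig]
  have hcard0 : 0 < T.card := Finset.card_pos.mpr hT
  have ht : (0:ℝ) < T.card := by exact_mod_cast hcard0
  have hn' : (0:ℝ) < n := by exact_mod_cast hn1
  have hkeyR : (T.card : ℝ) * r = (S : ℝ) + n * f J := by exact_mod_cast hkey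
  have hSleR : (S:ℝ) ≤ m * T.card := by exact_mod_cast hSle
  have hS0 : (0:ℝ) ≤ S := Nat.cast_nonneg S
  have h1 : (r:ℝ) ≤ B * C * n := Nat.floor_le (by positivity)
  have h2 : B * C * (n:ℝ) < r + 1 := Nat.lt_floor_add_one _
  rw [hEP]
  set p := (f J : ℝ) / (T.card : ℝ) with hpdef
  have hptp : (T.card : ℝ) * p = f J := by
    rw [hpdef, mul_div_cancel₀ _ ht.ne']
  rw [abs_sub_le_iff]
  constructor
  · rw [le_div_iff₀ hn']
    nlinarith [hptp, hkeyR, hS0, hSleR, ht, h1, h2,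
      mul_le_mul_of_nonneg_left h1 ht.le]
  · rw [le_div_iff₀ hn']
    nlinarith [hptp, hkeyR, hS0, hSleR, ht, h1, h2,
      mul_lt_mul_of_pos_left h2 ht]
lemma entryProb_add {n : ℕ} {δ B C : ℝ} (hT : (BCT n δ B C).Nonempty) (a b : ℕ)
    (ha : a < ⌊(n:ℝ)^δ⌋₊ + n) (hb : b < ⌊(n:ℝ)^δ⌋₊ + n) :
    entryProb n δ B C a b 0 = 1 - entryProb n δ B C a b 1 := by
  unfold entryProb
  have ht : (0:ℝ) < ((BCT n δ B C).card : ℝ) := by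
    exact_mod_cast Finset.card_pos.mpr hT
  have hent2 : ∀ A : Fin (⌊(n:ℝ)^δ⌋₊ + n) → Fin (⌊(n:ℝ)^δ⌋₊ + n) → Fin 2,
      ent A a b < 2 := by
    intro A; unfold ent; rw [dif_pos ⟨ha, hb⟩]; exact (A _ _).isLt
  have hfe : (BCT n δ B C).filter (fun A => ent A a b = 0)
      = (BCT n δ B C).filter (fun A => ¬ ent A a b = 1) :=
    Finset.filter_congr fun A _ => by have := hent2 A; constructor <;> (intro h; omega)
  have hc : ((BCT n δ B C).filter (fun A => ent A a b = 1)).card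
      + ((BCT n δ B C).filter (fun A => ent A a b = 0)).card = (BCT n δ B C).card := by
    rw [hfe]
    exact Finset.card_filter_add_card_filter_not _
  rw [eq_sub_iff_add_eq, ← add_div, div_eq_one_iff_eq ht.ne']
  exact_mod_cast (Nat.add_comm _ _ ▸ hc)


/-- Theorem 1.2(iii): the side-block entries are asymptotically `Ber(BC)`,
with total variation error `O(n^(δ-1) + n^(-δ/2+ε))`. -/
theorem side_block_entry_tv
    (δ B C : ℝ) (hδ0 : 0 < δ) (hδ1 : δ < 1) (hC0 : 0 < C) (hC1 : C < 3 / 4)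
    (hB0 : 0 < B) (hB1 : B < 1 / (Real.sqrt (C / 3 - C ^ 2 / 3) + C))
    (hne : ∃ n₀ : ℕ, ∀ n : ℕ, n₀ ≤ n → (BCT n δ B C).Nonempty) :
    ∀ ε > (0 : ℝ), ∃ K > (0 : ℝ), ∃ n₀ : ℕ, ∀ n : ℕ, n₀ ≤ n →
      dTVBer n δ B C 0 ⌊(n : ℝ) ^ δ⌋₊ (B * C) ≤
          K * ((n : ℝ) ^ (δ - 1) + (n : ℝ) ^ (-δ / 2 + ε)) ∧
      dTVBer n δ B C ⌊(n : ℝ) ^ δ⌋₊ 0 (B * C) ≤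
          K * ((n : ℝ) ^ (δ - 1) + (n : ℝ) ^ (-δ / 2 + ε)) := by
  obtain ⟨n₁, hn₁⟩ := hne
  intro ε hε
  refine ⟨4, by norm_num, max n₁ 1, fun n hn => ?_⟩
  have hn1 : 1 ≤ n := le_trans (le_max_right _ _) hn
  have hT := hn₁ n (le_trans (le_max_left _ _) hn)
  have hnr : (0:ℝ) < n := by exact_mod_cast hn1
  have hone : (1:ℝ) ≤ (n:ℝ)^δ := by
    calc (1:ℝ) = 1 ^ δ := (Real.one_rpow δ).symm
      _ ≤ (n:ℝ)^δ := Real.rpow_le_rpow zero_le_one (by exact_mod_cast hn1) hδ0.le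
  have hm : 0 < ⌊(n:ℝ)^δ⌋₊ := by rw [Nat.floor_pos]; exact hone
  have hmr : (⌊(n:ℝ)^δ⌋₊ : ℝ) ≤ (n:ℝ)^δ := Nat.floor_le (by positivity)
  have hb := entryProb_one_bound hT hn1 hm (by positivity : (0:ℝ) ≤ B * C)
  have ha : (0:ℕ) < ⌊(n:ℝ)^δ⌋₊ + n := by omega
  have hbb : ⌊(n:ℝ)^δ⌋₊ < ⌊(n:ℝ)^δ⌋₊ + n := by omega
  have hz := entryProb_add hT 0 ⌊(n:ℝ)^δ⌋₊ ha hbb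
  have hdtv : dTVBer n δ B C 0 ⌊(n:ℝ)^δ⌋₊ (B*C) ≤ 2*(((⌊(n:ℝ)^δ⌋₊:ℝ)+1)/n) := by
    unfold dTVBer
    rw [hz]
    have he2 : 1 - entryProb n δ B C 0 ⌊(n:ℝ)^δ⌋₊ 1 - (1 - B*C)
        = -(entryProb n δ B C 0 ⌊(n:ℝ)^δ⌋₊ 1 - B*C) := by ring
    rw [he2, abs_neg]
    linarith [hb]
  have hfin : 2*(((⌊(n:ℝ)^δ⌋₊:ℝ)+1)/n) ≤ 4 * ((n:ℝ)^(δ-1) + (n:ℝ)^(-δ/2+ε)) := by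
    have h4 : ((⌊(n:ℝ)^δ⌋₊:ℝ)+1)/n ≤ (2*(n:ℝ)^δ)/n := by
      gcongr
      linarith
    have h5 : (2*(n:ℝ)^δ)/n = 2*(n:ℝ)^(δ-1) := by
      rw [Real.rpow_sub hnr, Real.rpow_one]; ring
    have h6 : 0 < (n:ℝ)^(-δ/2+ε) := Real.rpow_pos_of_pos hnr _
    rw [h5] at h4
    linarith
  refine ⟨by linarith, ?_⟩
  have heq : dTVBer n δ B C ⌊(n:ℝ)^δ⌋₊ 0 (B*C) = dTVBer n δ B C 0 ⌊(n:ℝ)^δ⌋₊ (B*C) := by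
    unfold dTVBer
    rw [entryProb_transpose 0 ⌊(n:ℝ)^δ⌋₊ 0, entryProb_transpose 0 ⌊(n:ℝ)^δ⌋₊ 1]
  rw [heq]
  linarith
end

section
/- Let 0 ≤ δ < 1, 0 < C ≤ 1 and 0 < B ≤ 1/C, and suppose M_{n,δ}(B,C) is nonempty for all sufficiently large n. Let X^{(n)} be uniformly distributed on M_{n,δ}(B,C). Then for every integer k ≥ 1 and every ε > 0 there exist K > 0 and n₀ such that for all n ≥ n₀, |E[(X^{(n)}_{⌊n^δ⌋+1, ⌊n^δ⌋+1})^k] − C| ≤ K (n^{δ−1} + n^{−1/2+ε}). -/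
open Finset Filter

/-- `E[(X_{ab})^k]` for a uniform sample `X` from `BCT n δ B C`. -/
noncomputable def entryMoment (n : ℕ) (δ B C : ℝ) (a b k : ℕ) : ℝ :=
  (∑ A ∈ BCT n δ B C, ((ent A a b : ℝ)) ^ k) / ((BCT n δ B C).card : ℝ)

lemma bct_card_bot (m n : ℕ) :
    (Finset.univ.filter (fun j : Fin (m + n) => ¬ j.1 < m)).card = n := by
  rw [Finset.card_filter]
  rw [Fin.sum_univ_eq_sum_range (fun i => if ¬ i < m then 1 else 0)]
  simp only [Finset.sum_ite, Finset.sum_const, smul_eq_mul, mul_one, Finset.sum_const_zero,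
    add_zero, not_lt]
  have : Finset.filter (fun x => m ≤ x) (Finset.range (m + n)) = Finset.Ico m (m + n) := by
    ext x; simp [Finset.mem_filter, Finset.mem_Ico, and_comm]
  rw [this, Nat.card_Ico]; omega

lemma bct_col_swap (n : ℕ) (δ B C : ℝ) (a b b' : Fin (⌊(n : ℝ) ^ δ⌋₊ + n))
    (hb : ⌊(n : ℝ) ^ δ⌋₊ ≤ b.1) (hb' : ⌊(n : ℝ) ^ δ⌋₊ ≤ b'.1) :
    ∑ A ∈ BCT n δ B C, (A a b : ℕ) = ∑ A ∈ BCT n δ B C, (A a b' : ℕ) := by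
  set τ := Equiv.swap b b' with hτ
  have hτm : ∀ j : Fin (⌊(n : ℝ) ^ δ⌋₊ + n), ((τ j).1 < ⌊(n : ℝ) ^ δ⌋₊ ↔ j.1 < ⌊(n : ℝ) ^ δ⌋₊) := by
    intro j
    by_cases h1 : j = b
    · subst h1; rw [hτ, Equiv.swap_apply_left]; omega
    by_cases h2 : j = b'
    · subst h2; rw [hτ, Equiv.swap_apply_right]; omega
    · rw [hτ, Equiv.swap_apply_of_ne_of_ne h1 h2]
  have hmem : ∀ A ∈ BCT n δ B C, (fun i j => A i (τ j)) ∈ BCT n δ B C := by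
    intro A hA
    simp only [BCT, Finset.mem_filter, Finset.mem_univ, true_and] at hA ⊢
    obtain ⟨hrow, hcol⟩ := hA
    refine ⟨fun i => ?_, fun j => ?_⟩
    · have he : ∑ j, (A i (τ j) : ℕ) = ∑ j, (A i j : ℕ) :=
        Equiv.sum_comp τ (fun j => (A i j : ℕ))
      exact ⟨fun h => he.trans ((hrow i).1 h), fun h => he.trans ((hrow i).2 h)⟩
    · constructor
      · intro h
        exact (hcol (τ j)).1 ((hτm j).mpr h)
      · intro h
        exact (hcol (τ j)).2 (le_of_not_gt fun hc => absurd ((hτm j).mp hc) (not_lt.mpr h))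
  have hinv : ∀ A : Fin (⌊(n : ℝ) ^ δ⌋₊ + n) → Fin (⌊(n : ℝ) ^ δ⌋₊ + n) → Fin 2,
      (fun i j => (fun i j => A i (τ j)) i (τ j)) = A := by
    intro A; funext i j; simp [hτ, Equiv.swap_apply_self]
  refine Finset.sum_nbij' (fun A => fun i j => A i (τ j)) (fun A => fun i j => A i (τ j))
    hmem hmem (fun A _ => hinv A) (fun A _ => hinv A) (fun A _ => ?_)
  simp [hτ, Equiv.swap_apply_right]

/-- Corollary 1.3(i): convergence of all moments of the bottom-right entry to `C`. -/
theorem bottom_right_entry_moments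
    (δ B C : ℝ) (hδ0 : 0 ≤ δ) (hδ1 : δ < 1) (hC0 : 0 < C) (hC1 : C ≤ 1)
    (hB0 : 0 < B) (hB1 : B ≤ 1 / C)
    (hne : ∃ n₀ : ℕ, ∀ n : ℕ, n₀ ≤ n → (BCT n δ B C).Nonempty) :
    ∀ k : ℕ, 1 ≤ k → ∀ ε > (0 : ℝ), ∃ K > (0 : ℝ), ∃ n₀ : ℕ, ∀ n : ℕ, n₀ ≤ n →
      |entryMoment n δ B C ⌊(n : ℝ) ^ δ⌋₊ ⌊(n : ℝ) ^ δ⌋₊ k - C| ≤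
        K * ((n : ℝ) ^ (δ - 1) + (n : ℝ) ^ (-(1 : ℝ) / 2 + ε)) := by
  intro k hk ε hε
  obtain ⟨n₁, hn₁⟩ := hne
  refine ⟨2, by norm_num, max n₁ 1, fun n hn => ?_⟩
  have hn1 : 1 ≤ n := le_trans (le_max_right _ _) hn
  have hBne : (BCT n δ B C).Nonempty := hn₁ n (le_trans (le_max_left _ _) hn)
  set m := ⌊(n : ℝ) ^ δ⌋₊ with hm
  have hmN : m < m + n := by omega
  set a : Fin (m + n) := ⟨m, hmN⟩ with ha
  set cardB := (BCT n δ B C).card with hcardB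
  have hcard0 : 0 < cardB := Finset.card_pos.mpr hBne
  -- reduce the k-th moment to the first moment
  have hval : ∀ A : Fin (m + n) → Fin (m + n) → Fin 2, (A a a : ℕ) = 0 ∨ (A a a : ℕ) = 1 := by
    intro A; have := (A a a).2; omega
  have hpow : ∀ A ∈ BCT n δ B C, ((ent A m m : ℝ)) ^ k = ((A a a : ℕ) : ℝ) := by
    intro A _
    have hent : ent A m m = (A a a : ℕ) := by
      simp only [ent]
      split_ifs with h
      · rfl
      · omega
    rw [hent]
    rcases hval A with h | h <;> rw [h]
    · simp [zero_pow (by omega : k ≠ 0)]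
    · simp
  have hmom : entryMoment n δ B C m m k
      = ((∑ A ∈ BCT n δ B C, (A a a : ℕ) : ℕ) : ℝ) / (cardB : ℝ) := by
    rw [entryMoment, Finset.sum_congr rfl hpow, hcardB, Nat.cast_sum]
  -- the bottom columns
  obtain ⟨Bot, hBot⟩ : ∃ b : Finset (Fin (m + n)),
      b = Finset.univ.filter (fun j : Fin (m + n) => ¬ j.1 < m) := ⟨_, rfl⟩
  have hBotCard : Bot.card = n := by rw [hBot]; exact bct_card_bot m n
  have hrowsum : ∀ A ∈ BCT n δ B C,
      ∑ j ∈ Finset.univ.filter (fun j : Fin (m + n) => j.1 < m), (A a j : ℕ)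
        + ∑ j ∈ Bot, (A a j : ℕ) = ⌊C * (n : ℝ)⌋₊ := by
    intro A hA
    simp only [BCT, Finset.mem_filter, Finset.mem_univ, true_and] at hA
    rw [hBot, Finset.sum_filter_add_sum_filter_not]
    exact (hA.1 a).2 (le_refl m)
  have htop_le : ∀ A : Fin (m + n) → Fin (m + n) → Fin 2,
      ∑ j ∈ Finset.univ.filter (fun j : Fin (m + n) => j.1 < m), (A a j : ℕ) ≤ m := by
    intro A
    calc ∑ j ∈ Finset.univ.filter (fun j : Fin (m + n) => j.1 < m), (A a j : ℕ)
        ≤ ∑ _j ∈ Finset.univ.filter (fun j : Fin (m + n) => j.1 < m), 1 :=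
          Finset.sum_le_sum (fun j _ => Nat.lt_succ_iff.mp (A a j).2)
      _ = (Finset.univ.filter (fun j : Fin (m + n) => j.1 < m)).card := by simp
      _ ≤ m := by
          have h1 : (Finset.univ.filter (fun j : Fin (m + n) => ¬ j.1 < m)).card = n :=
            bct_card_bot m n
          have h2 := Finset.card_filter_add_card_filter_not
            (s := (Finset.univ : Finset (Fin (m + n)))) (p := fun j => j.1 < m)
          simp only [Finset.card_univ, Fintype.card_fin] at h2
          omega
  -- swap lemma: all bottom-column entries of row `a` have the same total over `BCT`
  have hswap : ∀ j ∈ Bot, ∑ A ∈ BCT n δ B C, (A a j : ℕ)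
      = ∑ A ∈ BCT n δ B C, (A a a : ℕ) := by
    intro j hj
    rw [hBot, Finset.mem_filter] at hj
    have hj' : m ≤ j.1 := le_of_not_gt hj.2
    exact bct_col_swap n δ B C a j a hj' (le_refl m)
  have hkey : ∑ A ∈ BCT n δ B C, ∑ j ∈ Bot, (A a j : ℕ)
      = n * ∑ A ∈ BCT n δ B C, (A a a : ℕ) := by
    rw [Finset.sum_comm, Finset.sum_congr rfl hswap, Finset.sum_const, hBotCard, smul_eq_mul]
  have hub : n * ∑ A ∈ BCT n δ B C, (A a a : ℕ) ≤ cardB * ⌊C * (n : ℝ)⌋₊ := by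
    rw [← hkey, hcardB, Finset.card_eq_sum_ones, Finset.sum_mul, one_mul]
    refine Finset.sum_le_sum (fun A hA => ?_)
    exact le_of_le_of_eq (Nat.le_add_left _ _) (hrowsum A hA)
  have hlb : cardB * ⌊C * (n : ℝ)⌋₊ ≤ n * (∑ A ∈ BCT n δ B C, (A a a : ℕ)) + cardB * m := by
    have h : ∑ _A ∈ BCT n δ B C, ⌊C * (n : ℝ)⌋₊
        ≤ ∑ A ∈ BCT n δ B C, (∑ j ∈ Bot, (A a j : ℕ) + m) := by
      refine Finset.sum_le_sum (fun A hA => ?_)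
      calc ⌊C * (n : ℝ)⌋₊
          = ∑ j ∈ Finset.univ.filter (fun j : Fin (m + n) => j.1 < m), (A a j : ℕ)
            + ∑ j ∈ Bot, (A a j : ℕ) := (hrowsum A hA).symm
        _ ≤ m + ∑ j ∈ Bot, (A a j : ℕ) := Nat.add_le_add_right (htop_le A) _
        _ = ∑ j ∈ Bot, (A a j : ℕ) + m := Nat.add_comm _ _
    rw [Finset.sum_const, smul_eq_mul, Finset.sum_add_distrib, hkey, Finset.sum_const,
      smul_eq_mul, ← hcardB] at h
    exact h
  -- pass to the reals
  have hn0 : (0 : ℝ) < n := by exact_mod_cast hn1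
  have hcardR : (0 : ℝ) < (cardB : ℝ) := by exact_mod_cast hcard0
  have hubR : (n : ℝ) * ((∑ A ∈ BCT n δ B C, (A a a : ℕ) : ℕ) : ℝ)
      ≤ (cardB : ℝ) * (⌊C * (n : ℝ)⌋₊ : ℝ) := by exact_mod_cast hub
  have hlbR : (cardB : ℝ) * (⌊C * (n : ℝ)⌋₊ : ℝ)
      ≤ (n : ℝ) * ((∑ A ∈ BCT n δ B C, (A a a : ℕ) : ℕ) : ℝ) + (cardB : ℝ) * (m : ℝ) := by
    exact_mod_cast hlb
  obtain ⟨x, hx⟩ : ∃ x : ℝ,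
      x = ((∑ A ∈ BCT n δ B C, (A a a : ℕ) : ℕ) : ℝ) / (cardB : ℝ) := ⟨_, rfl⟩
  obtain ⟨y, hy⟩ : ∃ y : ℝ, y = ((⌊C * (n : ℝ)⌋₊ : ℝ)) / (n : ℝ) := ⟨_, rfl⟩
  have hxy : x ≤ y := by
    rw [hx, hy, div_le_div_iff₀ hcardR hn0]
    linarith only [hubR]
  have hyx : y ≤ x + (m : ℝ) / (n : ℝ) := by
    rw [hy, hx, div_add_div _ _ (ne_of_gt hcardR) (ne_of_gt hn0),
      div_le_div_iff₀ hn0 (mul_pos hcardR hn0)]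
    linarith only [mul_le_mul_of_nonneg_right hlbR (le_of_lt hn0)]
  have hyC : y ≤ C := by
    rw [hy, div_le_iff₀ hn0]
    exact Nat.floor_le (by positivity)
  have hCy : C ≤ y + 1 / (n : ℝ) := by
    have hlt := Nat.lt_floor_add_one (C * (n : ℝ))
    have heq : y + 1 / (n : ℝ) = ((⌊C * (n : ℝ)⌋₊ : ℝ) + 1) / (n : ℝ) := by
      rw [hy, ← add_div]
    rw [heq, le_div_iff₀ hn0]
    linarith only [hlt]
  have h1 : 0 ≤ (m : ℝ) / (n : ℝ) := by positivity
  have h2 : 0 ≤ 1 / (n : ℝ) := by positivity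
  have habs : |x - C| ≤ (m : ℝ) / (n : ℝ) + 1 / (n : ℝ) := by
    rw [abs_le]
    constructor
    · linarith only [hCy, hyx]
    · linarith only [hxy, hyC, h1, h2]
  -- bound m/n and 1/n by n^(δ-1)
  have hrpow : (n : ℝ) ^ (δ - 1) = (n : ℝ) ^ δ / (n : ℝ) := by
    rw [Real.rpow_sub hn0, Real.rpow_one]
  have hmle : (m : ℝ) ≤ (n : ℝ) ^ δ := Nat.floor_le (Real.rpow_nonneg (le_of_lt hn0) δ)
  have h1le : (1 : ℝ) ≤ (n : ℝ) ^ δ :=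
    Real.one_le_rpow (by exact_mod_cast hn1) hδ0
  have hmn : (m : ℝ) / (n : ℝ) ≤ (n : ℝ) ^ (δ - 1) := by
    rw [hrpow]; gcongr
  have h1n : 1 / (n : ℝ) ≤ (n : ℝ) ^ (δ - 1) := by
    rw [hrpow]; gcongr
  have hpos2 : 0 ≤ (n : ℝ) ^ (-(1 : ℝ) / 2 + ε) := Real.rpow_nonneg (le_of_lt hn0) _
  calc |entryMoment n δ B C m m k - C| = |x - C| := by rw [hmom, ← hx]
    _ ≤ (m : ℝ) / (n : ℝ) + 1 / (n : ℝ) := habs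
    _ ≤ (n : ℝ) ^ (δ - 1) + (n : ℝ) ^ (δ - 1) := add_le_add hmn h1n
    _ = 2 * (n : ℝ) ^ (δ - 1) := by ring
    _ ≤ 2 * ((n : ℝ) ^ (δ - 1) + (n : ℝ) ^ (-(1 : ℝ) / 2 + ε)) := by linarith only [hpos2]
end

section
/- Let 0 < δ < 1, 0 < C < 3/4 and 0 < B < 1/(√(C/3 − C²/3) + C), and suppose M_{n,δ}(B,C) is nonempty for all sufficiently large n. Let X^{(n)} be uniformly distributed on M_{n,δ}(B,C). Then for every integer k ≥ 1 and every ε > 0 there exist K > 0 and n₀ such that for all n ≥ n₀, |E[(X^{(n)}_{1, ⌊n^δ⌋+1})^k] − BC| ≤ K (n^{δ−1} + n^{−δ/2+ε}). -/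
open Finset Filter

set_option maxHeartbeats 1000000

lemma cast_pow_eq_self_of_le_one {x : ℕ} (k : ℕ) (hk : 1 ≤ k) (hx : x ≤ 1) :
    ((x : ℝ)) ^ k = (x : ℝ) := by
  interval_cases x
  · simp [zero_pow (by omega : k ≠ 0)]
  · simp

lemma aux_side_card (m n : ℕ) (hn : 1 ≤ n) :
    (Finset.univ.filter (fun j : Fin (m + n) => m ≤ j.1)).card = n := by
  have heq : (Finset.univ.filter (fun j : Fin (m + n) => m ≤ j.1)).card
      = (Finset.univ : Finset (Fin n)).card := by
    refine Finset.card_nbij' (fun j => (⟨j.1 - m, by omega⟩ : Fin n))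
      (fun x => (⟨m + x.1, by omega⟩ : Fin (m + n))) (fun a _ => Finset.mem_univ _)
      (fun a _ => by simp) (fun a ha => ?_) (fun a _ => by ext; simp)
    have hma := (Finset.mem_filter.mp ha).2
    ext; simp; omega
  simpa using heq

lemma aux_bounds (m n F : ℕ) (hm : 1 ≤ m) (hn : 1 ≤ n)
    (s : Finset (Fin (m + n) → Fin (m + n) → Fin 2))
    (hrow : ∀ A ∈ s, ∀ i : Fin (m + n), i.1 < m → ∑ j, (A i j : ℕ) = F)
    (hswap : ∀ A ∈ s, ∀ b : Fin (m + n), m ≤ b.1 →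
      (fun i j => A i (Equiv.swap ⟨m, by omega⟩ b j)) ∈ s) :
    n * (∑ A ∈ s, (A ⟨0, by omega⟩ ⟨m, by omega⟩ : ℕ)) ≤ s.card * F ∧
    s.card * F ≤ n * (∑ A ∈ s, (A ⟨0, by omega⟩ ⟨m, by omega⟩ : ℕ)) + s.card * m := by
  have hmlt : m < m + n := by omega
  set i0 : Fin (m + n) := ⟨0, by omega⟩ with hi0def
  set jm : Fin (m + n) := ⟨m, by omega⟩ with hjmdef
  -- exchangeability over side columns
  have hexch : ∀ b : Fin (m + n), m ≤ b.1 →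
      ∑ A ∈ s, (A i0 b : ℕ) = ∑ A ∈ s, (A i0 jm : ℕ) := by
    intro b hb
    set σ := Equiv.swap jm b with hσdef
    have hT : ∀ A ∈ s, (fun i j => A i (σ j)) ∈ s := fun A hA => hswap A hA b hb
    refine Finset.sum_nbij' (fun A => fun i j => A i (σ j)) (fun A => fun i j => A i (σ j))
      hT hT (fun A _ => ?_) (fun A _ => ?_) (fun A _ => ?_)
    · funext i j; simp [hσdef, Equiv.swap_apply_self]
    · funext i j; simp [hσdef, Equiv.swap_apply_self]
    · simp [hσdef, Equiv.swap_apply_left]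
  set S := ∑ A ∈ s, (A i0 jm : ℕ) with hSdef
  have hkey : ∑ A ∈ s, ∑ j ∈ Finset.univ.filter (fun j : Fin (m + n) => m ≤ j.1),
      (A i0 j : ℕ) = n * S := by
    rw [Finset.sum_comm]
    calc ∑ j ∈ Finset.univ.filter (fun j : Fin (m + n) => m ≤ j.1), ∑ A ∈ s, (A i0 j : ℕ)
        = ∑ _j ∈ Finset.univ.filter (fun j : Fin (m + n) => m ≤ j.1), S :=
      Finset.sum_congr rfl (fun j hj => hexch j (Finset.mem_filter.mp hj).2)
    _ = n * S := by rw [Finset.sum_const, aux_side_card m n hn, smul_eq_mul]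
  have hperA : ∀ A ∈ s,
      (∑ j ∈ Finset.univ.filter (fun j : Fin (m + n) => m ≤ j.1), (A i0 j : ℕ)) ≤ F ∧
      F ≤ (∑ j ∈ Finset.univ.filter (fun j : Fin (m + n) => m ≤ j.1), (A i0 j : ℕ)) + m := by
    intro A hA
    have hrow0 : ∑ j, (A i0 j : ℕ) = F := hrow A hA i0 (by simp [hi0def]; omega)
    have hsplit := Finset.sum_filter_add_sum_filter_not Finset.univ
      (fun j : Fin (m + n) => m ≤ j.1) (fun j => (A i0 j : ℕ))
    have hcorncard : (Finset.univ.filter (fun j : Fin (m + n) => ¬ m ≤ j.1)).card = m := by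
      have h2 := Finset.card_filter_add_card_filter_not
        (s := (Finset.univ : Finset (Fin (m + n)))) (p := fun j : Fin (m + n) => m ≤ j.1)
      rw [aux_side_card m n hn, Finset.card_univ, Fintype.card_fin] at h2
      linarith
    have hcorn : (∑ j ∈ Finset.univ.filter (fun j : Fin (m + n) => ¬ m ≤ j.1), (A i0 j : ℕ)) ≤ m := by
      calc (∑ j ∈ Finset.univ.filter (fun j : Fin (m + n) => ¬ m ≤ j.1), (A i0 j : ℕ))
          ≤ ∑ _j ∈ Finset.univ.filter (fun j : Fin (m + n) => ¬ m ≤ j.1), 1 :=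
        Finset.sum_le_sum (fun j _ => Fin.is_le (A i0 j))
      _ = m := by rw [Finset.sum_const, hcorncard, smul_eq_mul, mul_one]
    rw [hrow0] at hsplit
    generalize hX : (∑ j ∈ Finset.univ.filter (fun j : Fin (m + n) => m ≤ j.1), (A i0 j : ℕ)) = X
      at hsplit ⊢
    generalize hY : (∑ j ∈ Finset.univ.filter (fun j : Fin (m + n) => ¬ m ≤ j.1), (A i0 j : ℕ)) = Y
      at hsplit hcorn
    exact ⟨Nat.le.intro hsplit, le_trans (le_of_eq hsplit.symm) (Nat.add_le_add_left hcorn X)⟩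
  constructor
  · rw [← hkey]
    calc ∑ A ∈ s, ∑ j ∈ Finset.univ.filter (fun j : Fin (m + n) => m ≤ j.1), (A i0 j : ℕ)
        ≤ ∑ _A ∈ s, F := Finset.sum_le_sum (fun A hA => (hperA A hA).1)
    _ = s.card * F := by rw [Finset.sum_const, smul_eq_mul]
  · rw [← hkey]
    calc s.card * F = ∑ _A ∈ s, F := by rw [Finset.sum_const, smul_eq_mul]
    _ ≤ ∑ A ∈ s, ((∑ j ∈ Finset.univ.filter (fun j : Fin (m + n) => m ≤ j.1), (A i0 j : ℕ)) + m) :=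
      Finset.sum_le_sum (fun A hA => (hperA A hA).2)
    _ = (∑ A ∈ s, ∑ j ∈ Finset.univ.filter (fun j : Fin (m + n) => m ≤ j.1), (A i0 j : ℕ))
        + s.card * m := by rw [Finset.sum_add_distrib, Finset.sum_const, smul_eq_mul]

/-- Corollary 1.3(iii): convergence of all moments of a side-block entry to `BC`. -/
theorem side_block_entry_moments
    (δ B C : ℝ) (hδ0 : 0 < δ) (hδ1 : δ < 1) (hC0 : 0 < C) (hC1 : C < 3 / 4)
    (hB0 : 0 < B) (hB1 : B < 1 / (Real.sqrt (C / 3 - C ^ 2 / 3) + C))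
    (hne : ∃ n₀ : ℕ, ∀ n : ℕ, n₀ ≤ n → (BCT n δ B C).Nonempty) :
    ∀ k : ℕ, 1 ≤ k → ∀ ε > (0 : ℝ), ∃ K > (0 : ℝ), ∃ n₀ : ℕ, ∀ n : ℕ, n₀ ≤ n →
      |entryMoment n δ B C 0 ⌊(n : ℝ) ^ δ⌋₊ k - B * C| ≤
        K * ((n : ℝ) ^ (δ - 1) + (n : ℝ) ^ (-δ / 2 + ε)) := by
  obtain ⟨n₁, hn₁⟩ := hne
  intro k hk ε hε
  refine ⟨2, by norm_num, max n₁ 1, fun n hn => ?_⟩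
  have hn1 : 1 ≤ n := le_of_max_le_right hn
  have hnR : (1 : ℝ) ≤ (n : ℝ) := by exact_mod_cast hn1
  have hnpos : (0 : ℝ) < (n : ℝ) := by linarith
  have hrp1 : (1 : ℝ) ≤ (n : ℝ) ^ δ := by
    calc (1 : ℝ) = (1 : ℝ) ^ δ := (Real.one_rpow δ).symm
    _ ≤ (n : ℝ) ^ δ := Real.rpow_le_rpow (by norm_num) hnR hδ0.le
  have hm1 : 1 ≤ ⌊(n : ℝ) ^ δ⌋₊ := Nat.le_floor (by exact_mod_cast hrp1)
  have hmlt : ⌊(n : ℝ) ^ δ⌋₊ < ⌊(n : ℝ) ^ δ⌋₊ + n := by omega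
  have hsne : (BCT n δ B C).Nonempty := hn₁ n (le_of_max_le_left hn)
  have hcard : (0 : ℝ) < ((BCT n δ B C).card : ℝ) :=
    by exact_mod_cast Finset.card_pos.mpr hsne
  -- membership facts
  have hmem : ∀ A ∈ BCT n δ B C, ∀ i : Fin (⌊(n : ℝ) ^ δ⌋₊ + n), i.1 < ⌊(n : ℝ) ^ δ⌋₊ →
      ∑ j, (A i j : ℕ) = ⌊B * C * (n : ℝ)⌋₊ := by
    intro A hA i hi
    rw [BCT, Finset.mem_filter] at hA
    exact (hA.2.1 i).1 hi
  have hswap : ∀ A ∈ BCT n δ B C, ∀ b : Fin (⌊(n : ℝ) ^ δ⌋₊ + n), ⌊(n : ℝ) ^ δ⌋₊ ≤ b.1 →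
      (fun i j => A i (Equiv.swap ⟨⌊(n : ℝ) ^ δ⌋₊, by omega⟩ b j)) ∈ BCT n δ B C := by
    intro A hA b hb
    set σ := Equiv.swap (⟨⌊(n : ℝ) ^ δ⌋₊, by omega⟩ : Fin (⌊(n : ℝ) ^ δ⌋₊ + n)) b with hσdef
    have hσfix : ∀ j : Fin (⌊(n : ℝ) ^ δ⌋₊ + n), j.1 < ⌊(n : ℝ) ^ δ⌋₊ → σ j = j := by
      intro j hj
      apply Equiv.swap_apply_of_ne_of_ne
      · intro h; rw [h] at hj; simp at hj
      · intro h; rw [h] at hj; omega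
    have hσside : ∀ j : Fin (⌊(n : ℝ) ^ δ⌋₊ + n), ⌊(n : ℝ) ^ δ⌋₊ ≤ j.1 →
        ⌊(n : ℝ) ^ δ⌋₊ ≤ (σ j).1 := by
      intro j hj
      rcases eq_or_ne j (⟨⌊(n : ℝ) ^ δ⌋₊, by omega⟩ : Fin (⌊(n : ℝ) ^ δ⌋₊ + n)) with h | h
      · rw [hσdef, h, Equiv.swap_apply_left]; exact hb
      · rcases eq_or_ne j b with h' | h'
        · rw [hσdef, h', Equiv.swap_apply_right]
        · rw [hσdef, Equiv.swap_apply_of_ne_of_ne h h']; exact hj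
    rw [BCT, Finset.mem_filter] at hA ⊢
    obtain ⟨_, hrow, hcol⟩ := hA
    refine ⟨Finset.mem_univ _, fun i => ⟨fun hi => ?_, fun hi => ?_⟩,
      fun j => ⟨fun hj => ?_, fun hj => ?_⟩⟩
    · simpa using (Equiv.sum_comp σ (fun j => (A i j : ℕ))).trans ((hrow i).1 hi)
    · simpa using (Equiv.sum_comp σ (fun j => (A i j : ℕ))).trans ((hrow i).2 hi)
    · simpa [hσfix j hj] using (hcol j).1 hj
    · simpa using (hcol (σ j)).2 (hσside j hj)
  obtain ⟨hub, hlb⟩ := aux_bounds ⌊(n : ℝ) ^ δ⌋₊ n ⌊B * C * (n : ℝ)⌋₊ hm1 hn1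
    (BCT n δ B C) hmem hswap
  set m := ⌊(n : ℝ) ^ δ⌋₊ with hmdef
  have h0lt : 0 < m + n := Nat.add_pos_right m hn1
  set S := ∑ A ∈ BCT n δ B C, (A (⟨0, h0lt⟩ : Fin (m + n)) ⟨m, hmlt⟩ : ℕ) with hSdef
  set F := ⌊B * C * (n : ℝ)⌋₊ with hFdef
  -- the moment equals S / card
  have hEM : entryMoment n δ B C 0 m k = (S : ℝ) / ((BCT n δ B C).card : ℝ) := by
    unfold entryMoment
    congr 1
    rw [hSdef, Nat.cast_sum]
    refine Finset.sum_congr rfl (fun A _ => ?_)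
    have hent : ent A 0 m = (A (⟨0, h0lt⟩ : Fin (m + n)) ⟨m, hmlt⟩ : ℕ) := by
      rw [ent, dif_pos ⟨h0lt, hmlt⟩]
    rw [hent, cast_pow_eq_self_of_le_one k hk (Fin.is_le _)]
  -- real-number estimates
  have hubR : (n : ℝ) * (S : ℝ) ≤ ((BCT n δ B C).card : ℝ) * (F : ℝ) := by exact_mod_cast hub
  have hlbR : ((BCT n δ B C).card : ℝ) * (F : ℝ)
      ≤ (n : ℝ) * (S : ℝ) + ((BCT n δ B C).card : ℝ) * (m : ℝ) := by exact_mod_cast hlb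
  have hF1 : (F : ℝ) ≤ B * C * (n : ℝ) := Nat.floor_le (by positivity)
  have hF2 : B * C * (n : ℝ) < (F : ℝ) + 1 := Nat.lt_floor_add_one _
  have hE1 : (S : ℝ) / ((BCT n δ B C).card : ℝ) ≤ B * C := by
    rw [div_le_iff₀ hcard]
    nlinarith
  have hE2 : B * C ≤ (S : ℝ) / ((BCT n δ B C).card : ℝ) + ((m : ℝ) + 1) / (n : ℝ) := by
    rw [div_add_div _ _ (ne_of_gt hcard) (ne_of_gt hnpos), le_div_iff₀ (by positivity)]
    nlinarith
  have habs : |entryMoment n δ B C 0 m k - B * C| ≤ ((m : ℝ) + 1) / (n : ℝ) := by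
    rw [hEM, abs_sub_le_iff]
    constructor
    · have h0 : (0 : ℝ) ≤ ((m : ℝ) + 1) / (n : ℝ) := by positivity
      linarith
    · linarith
  have hmle : (m : ℝ) ≤ (n : ℝ) ^ δ := Nat.floor_le (by positivity)
  have hfin : ((m : ℝ) + 1) / (n : ℝ) ≤ 2 * (n : ℝ) ^ (δ - 1) := by
    have h1 : ((m : ℝ) + 1) / (n : ℝ) ≤ (2 * (n : ℝ) ^ δ) / (n : ℝ) :=
      (div_le_div_iff_of_pos_right hnpos).mpr (by linarith)
    have h2 : (2 * (n : ℝ) ^ δ) / (n : ℝ) = 2 * (n : ℝ) ^ (δ - 1) := by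
      rw [Real.rpow_sub hnpos, Real.rpow_one]; ring
    linarith
  have hnn : (0 : ℝ) ≤ (n : ℝ) ^ (-δ / 2 + ε) := Real.rpow_nonneg hnpos.le _
  calc |entryMoment n δ B C 0 m k - B * C| ≤ ((m : ℝ) + 1) / (n : ℝ) := habs
  _ ≤ 2 * (n : ℝ) ^ (δ - 1) := hfin
  _ ≤ 2 * ((n : ℝ) ^ (δ - 1) + (n : ℝ) ^ (-δ / 2 + ε)) := by linarith
end

section
/- Let r ∈ ℕ^m and c ∈ ℕ^n be margins with ∑_{i=1}^m r_i = ∑_{j=1}^n c_j, and let Z = (z_{ij}) be a typical table for (r,c). If indices i, i′ satisfy r_i = r_{i′} and indices j, j′ satisfy c_j = c_{j′}, then z_{ij} = z_{i′j′}. -/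
open Finset Filter

/-- The binary transportation polytope: `m × n` real matrices with entries in `[0,1]`,
row sums `r` and column sums `c`. -/
def P01 {m n : ℕ} (r : Fin m → ℕ) (c : Fin n → ℕ) : Set (Fin m → Fin n → ℝ) :=
  {Z | (∀ i j, 0 ≤ Z i j ∧ Z i j ≤ 1) ∧ (∀ i, ∑ j, Z i j = (r i : ℝ)) ∧
    (∀ j, ∑ i, Z i j = (c j : ℝ))}

/-- The Bernoulli entropy functional
`g(Z) = ∑_{i,j} z_{ij} ln(1/z_{ij}) + (1 - z_{ij}) ln(1/(1 - z_{ij}))`. -/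
noncomputable def entG {m n : ℕ} (Z : Fin m → Fin n → ℝ) : ℝ :=
  ∑ i, ∑ j, (Z i j * Real.log (1 / Z i j) + (1 - Z i j) * Real.log (1 / (1 - Z i j)))

/-- `Z` is a typical table for the margins `(r, c)`: it has all entries in `(0,1)`,
lies in the binary transportation polytope, and maximizes `g` among all matrices in the
polytope with entries in `(0,1)`. -/
def IsTypicalTable {m n : ℕ} (r : Fin m → ℕ) (c : Fin n → ℕ)
    (Z : Fin m → Fin n → ℝ) : Prop :=
  (∀ i j, 0 < Z i j ∧ Z i j < 1) ∧ Z ∈ P01 r c ∧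
    ∀ W ∈ P01 r c, (∀ i j, 0 < W i j ∧ W i j < 1) → entG W ≤ entG Z

/-- Bernoulli entropy of a single entry. -/
noncomputable def entH (t : ℝ) : ℝ :=
  t * Real.log (1 / t) + (1 - t) * Real.log (1 / (1 - t))

lemma entH_eq (t : ℝ) : entH t = -(t * Real.log t) - ((1 - t) * Real.log (1 - t)) := by
  simp only [entH, one_div, Real.log_inv]
  ring

lemma entG_eq {m n : ℕ} (Z : Fin m → Fin n → ℝ) :
    entG Z = ∑ p : Fin m × Fin n, entH (Z p.1 p.2) := by
  rw [Fintype.sum_prod_type]; rfl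

lemma entH_mid_le {a b : ℝ} (ha : 0 ≤ a) (hb : 0 ≤ b) (ha1 : a ≤ 1) (hb1 : b ≤ 1) :
    (entH a + entH b) / 2 ≤ entH ((a + b) / 2) := by
  rcases eq_or_ne a b with rfl | hab
  · rw [show (a + a) / 2 = a by ring]; ring_nf; exact le_refl _
  · have hf := Real.strictConvexOn_mul_log
    have h1 : (fun x => x * Real.log x) ((1/2 : ℝ) • a + (1/2 : ℝ) • b) <
        (1/2 : ℝ) • (a * Real.log a) + (1/2 : ℝ) • (b * Real.log b) :=
      hf.2 ha hb hab (by norm_num) (by norm_num) (by norm_num)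
    have hab' : (1 : ℝ) - a ≠ 1 - b := by intro h; apply hab; linarith
    have h2 : (fun x => x * Real.log x) ((1/2 : ℝ) • (1 - a) + (1/2 : ℝ) • (1 - b)) <
        (1/2 : ℝ) • ((1 - a) * Real.log (1 - a)) + (1/2 : ℝ) • ((1 - b) * Real.log (1 - b)) :=
      hf.2 (by linarith : (0:ℝ) ≤ 1 - a) (by linarith : (0:ℝ) ≤ 1 - b) hab'
        (by norm_num) (by norm_num) (by norm_num)
    simp only [smul_eq_mul] at h1 h2
    rw [entH_eq, entH_eq, entH_eq]
    have e1 : (1/2 : ℝ) * a + (1/2 : ℝ) * b = (a + b) / 2 := by ring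
    have e2 : (1/2 : ℝ) * (1 - a) + (1/2 : ℝ) * (1 - b) = 1 - (a + b) / 2 := by ring
    rw [e1] at h1
    rw [e2] at h2
    linarith

lemma entH_mid_lt {a b : ℝ} (ha : 0 ≤ a) (hb : 0 ≤ b) (ha1 : a ≤ 1) (hb1 : b ≤ 1)
    (hab : a ≠ b) : (entH a + entH b) / 2 < entH ((a + b) / 2) := by
  have hf := Real.strictConvexOn_mul_log
  have h1 : (fun x => x * Real.log x) ((1/2 : ℝ) • a + (1/2 : ℝ) • b) <
      (1/2 : ℝ) • (a * Real.log a) + (1/2 : ℝ) • (b * Real.log b) :=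
    hf.2 ha hb hab (by norm_num) (by norm_num) (by norm_num)
  have hab' : (1 : ℝ) - a ≠ 1 - b := by intro h; apply hab; linarith
  have h2 : (fun x => x * Real.log x) ((1/2 : ℝ) • (1 - a) + (1/2 : ℝ) • (1 - b)) <
      (1/2 : ℝ) • ((1 - a) * Real.log (1 - a)) + (1/2 : ℝ) • ((1 - b) * Real.log (1 - b)) :=
    hf.2 (by linarith : (0:ℝ) ≤ 1 - a) (by linarith : (0:ℝ) ≤ 1 - b) hab'
      (by norm_num) (by norm_num) (by norm_num)
  simp only [smul_eq_mul] at h1 h2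
  rw [entH_eq, entH_eq, entH_eq]
  have e1 : (1/2 : ℝ) * a + (1/2 : ℝ) * b = (a + b) / 2 := by ring
  have e2 : (1/2 : ℝ) * (1 - a) + (1/2 : ℝ) * (1 - b) = 1 - (a + b) / 2 := by ring
  rw [e1] at h1
  rw [e2] at h2
  linarith

/-- Uniqueness of the maximizer: any other element of the open polytope attaining at least
the maximum value coincides with the typical table. -/
lemma typical_table_unique {m n : ℕ} (r : Fin m → ℕ) (c : Fin n → ℕ)
    (Z : Fin m → Fin n → ℝ) (hZ : IsTypicalTable r c Z)
    (W : Fin m → Fin n → ℝ) (hW01 : ∀ i j, 0 < W i j ∧ W i j < 1)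
    (hWmem : W ∈ P01 r c) (hent : entG Z ≤ entG W) :
    ∀ i j, Z i j = W i j := by
  obtain ⟨hZ01, hZmem, hZmax⟩ := hZ
  by_contra hne
  push_neg at hne
  obtain ⟨i₀, j₀, hne⟩ := hne
  set M : Fin m → Fin n → ℝ := fun i j => (Z i j + W i j) / 2 with hM
  obtain ⟨hZb, hZr, hZc⟩ := hZmem
  obtain ⟨hWb, hWr, hWc⟩ := hWmem
  have hM01 : ∀ i j, 0 < M i j ∧ M i j < 1 := fun i j => by
    obtain ⟨h1, h2⟩ := hZ01 i j; obtain ⟨h3, h4⟩ := hW01 i j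
    constructor <;> simp only [hM] <;> nlinarith
  have hMmem : M ∈ P01 r c := by
    refine ⟨fun i j => ⟨(hM01 i j).1.le, (hM01 i j).2.le⟩, fun i => ?_, fun j => ?_⟩
    · simp only [hM, ← Finset.sum_div, Finset.sum_add_distrib, hZr i, hWr i]; ring
    · simp only [hM, ← Finset.sum_div, Finset.sum_add_distrib, hZc j, hWc j]; ring
  have hle : entG M ≤ entG Z := hZmax M hMmem hM01
  have hlt : (entG Z + entG W) / 2 < entG M := by
    rw [entG_eq Z, entG_eq W, entG_eq M, ← Finset.sum_add_distrib, Finset.sum_div]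
    refine Finset.sum_lt_sum (fun p _ => ?_) ⟨(i₀, j₀), Finset.mem_univ _, ?_⟩
    · exact entH_mid_le (hZ01 p.1 p.2).1.le (hW01 p.1 p.2).1.le
        (hZ01 p.1 p.2).2.le (hW01 p.1 p.2).2.le
    · exact entH_mid_lt (hZ01 i₀ j₀).1.le (hW01 i₀ j₀).1.le
        (hZ01 i₀ j₀).2.le (hW01 i₀ j₀).2.le hne
  linarith

lemma swap_eval {k : ℕ} (f : Fin k → ℕ) (i i' : Fin k) (h : f i = f i') (a : Fin k) :
    f (Equiv.swap i i' a) = f a := by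
  rcases eq_or_ne a i with rfl | h1
  · rw [Equiv.swap_apply_left, ← h]
  · rcases eq_or_ne a i' with rfl | h2
    · rw [Equiv.swap_apply_right, h]
    · rw [Equiv.swap_apply_of_ne_of_ne h1 h2]

/-- Symmetry of the typical table: entries whose row margins agree and whose column
margins agree must be equal. -/
theorem typical_table_symmetry {m n : ℕ} (r : Fin m → ℕ) (c : Fin n → ℕ)
    (hrc : ∑ i, r i = ∑ j, c j)
    (Z : Fin m → Fin n → ℝ) (hZ : IsTypicalTable r c Z)
    (i i' : Fin m) (j j' : Fin n) (hr : r i = r i') (hc : c j = c j') :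
    Z i j = Z i' j' := by
  set σ := Equiv.swap i i' with hσ
  set τ := Equiv.swap j j' with hτ
  set W : Fin m → Fin n → ℝ := fun a b => Z (σ a) (τ b) with hW
  obtain ⟨hZ01, ⟨hZb, hZr, hZc⟩, hZmax⟩ := hZ
  have hW01 : ∀ a b, 0 < W a b ∧ W a b < 1 := fun a b => hZ01 _ _
  have hWmem : W ∈ P01 r c := by
    refine ⟨fun a b => ⟨(hW01 a b).1.le, (hW01 a b).2.le⟩, fun a => ?_, fun b => ?_⟩
    · rw [show ∑ b, W a b = ∑ b, Z (σ a) (τ b) from rfl, Equiv.sum_comp τ (fun b => Z (σ a) b),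
        hZr (σ a), swap_eval r i i' hr a]
    · rw [show ∑ a, W a b = ∑ a, Z (σ a) (τ b) from rfl, Equiv.sum_comp σ (fun a => Z a (τ b)),
        hZc (τ b), swap_eval c j j' hc b]
  have hent : entG W = entG Z := by
    rw [entG_eq W, entG_eq Z]
    rw [show ∑ p : Fin m × Fin n, entH (W p.1 p.2)
        = ∑ p : Fin m × Fin n, entH (Z ((Equiv.prodCongr σ τ) p).1 ((Equiv.prodCongr σ τ) p).2)
        from rfl]
    exact Equiv.sum_comp (Equiv.prodCongr σ τ) (fun p => entH (Z p.1 p.2))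
  have := typical_table_unique r c Z ⟨hZ01, ⟨hZb, hZr, hZc⟩, hZmax⟩ W hW01 hWmem
    (hent ▸ le_refl _) i j
  rw [this]
  simp only [hW, hσ, hτ, Equiv.swap_apply_left]
end

section
/- Let 0 < δ ≤ 1/2, 0 < C < 3/4 and 0 < B < 1/(√(C/3 − C²/3) + C), suppose M_{n,δ}(B,C) is nonempty for all sufficiently large n, and let X^{(n)} be uniformly distributed on M_{n,δ}(B,C). Then for every ε > 0, as n → ∞: |E[(X^{(n)}_{1, ⌊n^δ⌋+1} − BC)²] − (BC − B²C²)| = O(n^{δ−1} + n^{−δ/2+ε}) and E[(X^{(n)}_{1, ⌊n^δ⌋+1} − BC)(X^{(n)}_{1, ⌊n^δ⌋+2} − BC)] = O(n^{δ−1} + n^{−δ/2+ε}). -/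
open Finset Filter

section Aux
variable {n : ℕ} {δ B C : ℝ}

lemma perm_mem (σ : Equiv.Perm (Fin (⌊(n : ℝ) ^ δ⌋₊ + n)))
    (hσ : ∀ j, ((σ j).1 < ⌊(n : ℝ) ^ δ⌋₊ ↔ j.1 < ⌊(n : ℝ) ^ δ⌋₊))
    {A} (hA : A ∈ BCT n δ B C) : (fun i j => A i (σ j)) ∈ BCT n δ B C := by
  simp only [BCT, Finset.mem_filter, Finset.mem_univ, true_and] at hA ⊢
  obtain ⟨hr, hc⟩ := hA
  refine ⟨fun i => ?_, fun j => ?_⟩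
  · have hsum : ∑ j, (A i (σ j) : ℕ) = ∑ j, (A i j : ℕ) := Equiv.sum_comp σ fun j => (A i j : ℕ)
    exact ⟨fun h => by rw [hsum]; exact (hr i).1 h, fun h => by rw [hsum]; exact (hr i).2 h⟩
  · exact ⟨fun h => (hc (σ j)).1 ((hσ j).2 h), fun h => (hc (σ j)).2 (by have := hσ j; omega)⟩

lemma perm_sum (σ : Equiv.Perm (Fin (⌊(n : ℝ) ^ δ⌋₊ + n)))
    (hσ : ∀ j, ((σ j).1 < ⌊(n : ℝ) ^ δ⌋₊ ↔ j.1 < ⌊(n : ℝ) ^ δ⌋₊))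
    (F : (Fin (⌊(n : ℝ) ^ δ⌋₊ + n) → Fin (⌊(n : ℝ) ^ δ⌋₊ + n) → Fin 2) → ℝ) :
    ∑ A ∈ BCT n δ B C, F (fun i j => A i (σ j)) = ∑ A ∈ BCT n δ B C, F A := by
  have hσ' : ∀ j, ((σ⁻¹ j).1 < ⌊(n : ℝ) ^ δ⌋₊ ↔ j.1 < ⌊(n : ℝ) ^ δ⌋₊) := by
    intro j
    have h := hσ (σ⁻¹ j)
    simpa using h.symm
  refine Finset.sum_equiv
    ⟨fun A i j => A i (σ j), fun A i j => A i (σ⁻¹ j),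
      fun A => by funext i j; simp, fun A => by funext i j; simp⟩ (fun A => ?_) (fun A _ => rfl)
  constructor
  · intro hA; exact perm_mem σ hσ hA
  · intro hA
    have h2 := perm_mem σ⁻¹ hσ' hA
    have heq : (fun i j => ((⟨fun A i j => A i (σ j), fun A i j => A i (σ⁻¹ j),
        fun A => by funext i j; simp, fun A => by funext i j; simp⟩ :
        (Fin (⌊(n : ℝ) ^ δ⌋₊ + n) → Fin (⌊(n : ℝ) ^ δ⌋₊ + n) → Fin 2) ≃ _) A) i (σ⁻¹ j)) = A := by
      funext i j; simp
    rwa [heq] at h2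

lemma swap_pres (a b : Fin (⌊(n : ℝ) ^ δ⌋₊ + n)) (ha : ⌊(n : ℝ) ^ δ⌋₊ ≤ a.1)
    (hb : ⌊(n : ℝ) ^ δ⌋₊ ≤ b.1) :
    ∀ j, ((Equiv.swap a b j).1 < ⌊(n : ℝ) ^ δ⌋₊ ↔ j.1 < ⌊(n : ℝ) ^ δ⌋₊) := by
  intro j
  rcases eq_or_ne j a with rfl | hja
  · rw [Equiv.swap_apply_left]; omega
  rcases eq_or_ne j b with rfl | hjb
  · rw [Equiv.swap_apply_right]; omega
  rw [Equiv.swap_apply_of_ne_of_ne hja hjb]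

end Aux

lemma assemble (q Z P R e : ℝ) (hZ : 0 < Z) (hq0 : 0 < q) (hq1 : q < 1) (he : 0 ≤ e)
    (hP : |P - q * Z| ≤ e * Z) (hR : |R - q ^ 2 * Z| ≤ 6 * e * Z) :
    |((1 - 2 * q) * P + q ^ 2 * Z) / Z - (q - q ^ 2)| ≤ 3 * e ∧
      |(R - 2 * q * P + q ^ 2 * Z) / Z| ≤ 8 * e := by
  have hq3 : |1 - 2 * q| ≤ 3 := by rw [abs_le]; constructor <;> nlinarith
  constructor
  · have h1 : ((1 - 2 * q) * P + q ^ 2 * Z) / Z - (q - q ^ 2) = (1 - 2 * q) * (P - q * Z) / Z := by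
      field_simp; ring
    rw [h1, abs_div, abs_mul, abs_of_pos hZ, div_le_iff₀ hZ]
    nlinarith [abs_nonneg (P - q * Z), abs_nonneg (1 - 2 * q)]
  · have h2 : R - 2 * q * P + q ^ 2 * Z = (R - q ^ 2 * Z) + (-(2 * q)) * (P - q * Z) := by ring
    rw [abs_div, abs_of_pos hZ, div_le_iff₀ hZ, h2]
    have h3 : |(R - q ^ 2 * Z) + (-(2 * q)) * (P - q * Z)| ≤
        |R - q ^ 2 * Z| + (2 * q) * |P - q * Z| := by
      calc |(R - q ^ 2 * Z) + (-(2 * q)) * (P - q * Z)| ≤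
          |R - q ^ 2 * Z| + |(-(2 * q)) * (P - q * Z)| := abs_add_le _ _
        _ = |R - q ^ 2 * Z| + (2 * q) * |P - q * Z| := by
            rw [abs_mul, abs_neg, abs_of_pos (by positivity : (0:ℝ) < 2 * q)]
    nlinarith [abs_nonneg (P - q * Z)]

lemma divabs {a b c nn : ℝ} (hn : 0 < nn) (h : |nn * a - nn * b| ≤ c) : |a - b| ≤ c / nn := by
  rw [le_div_iff₀ hn]
  have h2 : |nn * a - nn * b| = |a - b| * nn := by
    rw [← mul_sub, abs_mul, abs_of_pos hn, mul_comm]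
  linarith [h2 ▸ h]

set_option maxHeartbeats 2000000 in
lemma main_est (n : ℕ) (δ B C : ℝ) (hq0 : 0 < B * C) (hq1 : B * C < 1)
    (hδ0 : 0 < δ) (hδ1 : δ ≤ 1) (hn2 : 2 ≤ n) (hZne : (BCT n δ B C).Nonempty) :
    |(∑ A ∈ BCT n δ B C, ((ent A 0 ⌊(n : ℝ) ^ δ⌋₊ : ℝ) - B * C) ^ 2) /
        ((BCT n δ B C).card : ℝ) - (B * C - B ^ 2 * C ^ 2)| ≤ 16 * (n : ℝ) ^ (δ - 1) ∧
    |(∑ A ∈ BCT n δ B C, (((ent A 0 ⌊(n : ℝ) ^ δ⌋₊ : ℝ) - B * C) *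
          ((ent A 0 (⌊(n : ℝ) ^ δ⌋₊ + 1) : ℝ) - B * C))) /
        ((BCT n δ B C).card : ℝ)| ≤ 16 * (n : ℝ) ^ (δ - 1) := by
  have hnR1 : (1 : ℝ) ≤ (n : ℝ) := by exact_mod_cast Nat.one_le_iff_ne_zero.mpr (by omega)
  have hnRpos : (0 : ℝ) < (n : ℝ) := by linarith
  have hmfloor : (⌊(n : ℝ) ^ δ⌋₊ : ℝ) ≤ (n : ℝ) ^ δ := Nat.floor_le (by positivity)
  have hm1 : 1 ≤ ⌊(n : ℝ) ^ δ⌋₊ := by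
    have : (1 : ℝ) ≤ (n : ℝ) ^ δ := Real.one_le_rpow hnR1 hδ0.le
    exact Nat.le_floor (by exact_mod_cast this)
  have hmn : ⌊(n : ℝ) ^ δ⌋₊ ≤ n := by
    have h1 : (n : ℝ) ^ δ ≤ (n : ℝ) ^ (1 : ℝ) := Real.rpow_le_rpow_of_exponent_le hnR1 hδ1
    rw [Real.rpow_one] at h1
    calc ⌊(n : ℝ) ^ δ⌋₊ ≤ ⌊(n : ℝ)⌋₊ := Nat.floor_le_floor h1
      _ = n := Nat.floor_natCast n
  set m := ⌊(n : ℝ) ^ δ⌋₊ with hmdef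
  have h0lt : 0 < m + n := by omega
  have hmlt : m < m + n := by omega
  have hm1lt : m + 1 < m + n := by omega
  -- indices
  set i0 : Fin (m + n) := ⟨0, h0lt⟩ with hi0
  set b0 : Fin (m + n) := ⟨m, hmlt⟩ with hb0
  set b1 : Fin (m + n) := ⟨m + 1, hm1lt⟩ with hb1
  set side : Finset (Fin (m + n)) := Finset.univ.filter (fun j => m ≤ j.1) with hsidedef
  have hb0side : b0 ∈ side := by simp [hsidedef, hb0]
  have hb1side : b1 ∈ side := by simp [hsidedef, hb1]
  have hside : side.card = n := by
    have h1 : side.card = ∑ j : Fin (m + n), if m ≤ j.1 then 1 else 0 :=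
      Finset.card_filter _ _
    rw [Fin.sum_univ_eq_sum_range (fun j => if m ≤ j then 1 else 0) (m + n)] at h1
    have h2 : ∑ j ∈ Finset.range (m + n), (if m ≤ j then 1 else 0) =
        ((Finset.range (m + n)).filter (fun j => m ≤ j)).card := (Finset.card_filter _ _).symm
    have h3 : (Finset.range (m + n)).filter (fun j => m ≤ j) = Finset.Ico m (m + n) := by
      ext x; simp [Finset.mem_Ico]; omega
    rw [h2, h3, Nat.card_Ico] at h1
    omega
  -- claim I: exchangeability of single entries
  have claimI : ∀ b ∈ side, ∑ A ∈ BCT n δ B C, ((A i0 b : ℕ) : ℝ) =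
      ∑ A ∈ BCT n δ B C, ((A i0 b0 : ℕ) : ℝ) := by
    intro b hb
    have hbs : m ≤ b.1 := by simpa [hsidedef] using hb
    have h := perm_sum (B := B) (C := C) (Equiv.swap b b0) (swap_pres b b0 hbs (le_refl m))
      (fun A => ((A i0 b0 : ℕ) : ℝ))
    simpa [Equiv.swap_apply_right] using h
  -- claim II: exchangeability of pairs
  have claimII : ∀ b ∈ side, ∀ c ∈ side, b ≠ c →
      ∑ A ∈ BCT n δ B C, ((A i0 b : ℕ) : ℝ) * ((A i0 c : ℕ) : ℝ) =
      ∑ A ∈ BCT n δ B C, ((A i0 b0 : ℕ) : ℝ) * ((A i0 b1 : ℕ) : ℝ) := by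
    intro b hb c hc hbc
    have hbs : m ≤ b.1 := by simpa [hsidedef] using hb
    have hcs : m ≤ c.1 := by simpa [hsidedef] using hc
    have hb0b1 : b0 ≠ b1 := by
      intro h; rw [hb0, hb1] at h; exact absurd (congrArg Fin.val h) (by simp)
    set t1 := Equiv.swap b0 b with ht1
    have ht1b0 : t1 b0 = b := Equiv.swap_apply_left b0 b
    have ht1b1side : m ≤ (t1 b1).1 := by
      rcases eq_or_ne b1 b with rfl | hne
      · rw [ht1, Equiv.swap_apply_right]
      · rw [ht1, Equiv.swap_apply_of_ne_of_ne (Ne.symm hb0b1) hne]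
        rw [hb1]; exact Nat.le_succ m
    have hbt1b1 : t1 b1 ≠ b := by
      intro h
      exact hb0b1 (t1.injective (ht1b0.trans h.symm))
    set σ := t1.trans (Equiv.swap (t1 b1) c) with hσdef
    have key1 : σ b0 = b := by
      rw [hσdef, Equiv.trans_apply, ht1b0, Equiv.swap_apply_of_ne_of_ne hbt1b1.symm hbc]
    have key2 : σ b1 = c := by
      rw [hσdef, Equiv.trans_apply, Equiv.swap_apply_left]
    have hσpres : ∀ j, ((σ j).1 < m ↔ j.1 < m) := by
      intro j
      rw [hσdef, Equiv.trans_apply]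
      exact (swap_pres (t1 b1) c ht1b1side hcs (t1 j)).trans
        (swap_pres b0 b (le_refl m) hbs j)
    have h := perm_sum (B := B) (C := C) σ hσpres (fun A => ((A i0 b0 : ℕ) : ℝ) * ((A i0 b1 : ℕ) : ℝ))
    simp only at h
    rw [key1, key2] at h
    exact h
  -- row-sum facts
  have hrow0 : ∀ A ∈ BCT n δ B C, ∑ j, (A i0 j : ℕ) = ⌊B * C * (n : ℝ)⌋₊ := by
    intro A hA
    simp only [BCT, Finset.mem_filter, Finset.mem_univ, true_and] at hA
    exact (hA.1 i0).1 (by rw [hi0]; exact hm1)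
  -- bounds on the side-row sum
  have hSr : ∀ A ∈ BCT n δ B C,
      |(∑ j ∈ side, ((A i0 j : ℕ) : ℝ)) - B * C * n| ≤ (m : ℝ) + 1 ∧
      (0 : ℝ) ≤ (∑ j ∈ side, ((A i0 j : ℕ) : ℝ)) ∧
      (∑ j ∈ side, ((A i0 j : ℕ) : ℝ)) ≤ B * C * n := by
    intro A hA
    have hrow := hrow0 A hA
    have hsplit : (∑ j ∈ side, (A i0 j : ℕ)) +
        ∑ j ∈ Finset.univ.filter (fun j : Fin (m + n) => ¬ m ≤ j.1), (A i0 j : ℕ) =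
        ⌊B * C * (n : ℝ)⌋₊ := by
      rw [← hrow, hsidedef]
      exact Finset.sum_filter_add_sum_filter_not _ _ _
    have hccard : (Finset.univ.filter (fun j : Fin (m + n) => ¬ m ≤ j.1)).card = m := by
      have h1 : (Finset.univ.filter (fun j : Fin (m + n) => ¬ m ≤ j.1)).card =
          ∑ j : Fin (m + n), if ¬ m ≤ j.1 then 1 else 0 := Finset.card_filter _ _
      rw [Fin.sum_univ_eq_sum_range (fun j => if ¬ m ≤ j then 1 else 0) (m + n)] at h1
      have h2 : ∑ j ∈ Finset.range (m + n), (if ¬ m ≤ j then 1 else 0) =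
          ((Finset.range (m + n)).filter (fun j => ¬ m ≤ j)).card := (Finset.card_filter _ _).symm
      have h3 : (Finset.range (m + n)).filter (fun j => ¬ m ≤ j) = Finset.range m := by
        ext x; simp; omega
      rw [h2, h3, Finset.card_range] at h1
      omega
    have hcorner : ∑ j ∈ Finset.univ.filter (fun j : Fin (m + n) => ¬ m ≤ j.1), (A i0 j : ℕ) ≤ m := by
      calc ∑ j ∈ Finset.univ.filter (fun j : Fin (m + n) => ¬ m ≤ j.1), (A i0 j : ℕ) ≤
          (Finset.univ.filter (fun j : Fin (m + n) => ¬ m ≤ j.1)).card • 1 :=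
            Finset.sum_le_card_nsmul _ _ 1 (fun x _ => by have := (A i0 x).isLt; omega)
        _ = m := by rw [hccard]; simp
    have hfl1 : (⌊B * C * (n : ℝ)⌋₊ : ℝ) ≤ B * C * n := Nat.floor_le (by positivity)
    have hfl2 : B * C * (n : ℝ) < (⌊B * C * (n : ℝ)⌋₊ : ℝ) + 1 := Nat.lt_floor_add_one _
    have hcast : (∑ j ∈ side, ((A i0 j : ℕ) : ℝ)) = ((∑ j ∈ side, (A i0 j : ℕ) : ℕ) : ℝ) := by
      push_cast; ring
    have hle : (∑ j ∈ side, (A i0 j : ℕ)) ≤ ⌊B * C * (n : ℝ)⌋₊ := by omega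
    have hge : ⌊B * C * (n : ℝ)⌋₊ ≤ (∑ j ∈ side, (A i0 j : ℕ)) + m := by omega
    have hleR : ((∑ j ∈ side, (A i0 j : ℕ) : ℕ) : ℝ) ≤ (⌊B * C * (n : ℝ)⌋₊ : ℝ) := by exact_mod_cast hle
    have hgeR : (⌊B * C * (n : ℝ)⌋₊ : ℝ) ≤ ((∑ j ∈ side, (A i0 j : ℕ) : ℕ) : ℝ) + m := by
      exact_mod_cast hge
    refine ⟨abs_le.mpr ⟨by rw [hcast]; linarith, by rw [hcast]; linarith⟩, ?_, ?_⟩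
    · positivity
    · rw [hcast]; linarith
  -- normalization
  have hZpos : (0 : ℝ) < ((BCT n δ B C).card : ℝ) := by
    exact_mod_cast Finset.card_pos.mpr hZne
  set Z := ((BCT n δ B C).card : ℝ) with hZdef
  -- first moment
  have hnP : (n : ℝ) * (∑ A ∈ BCT n δ B C, ((A i0 b0 : ℕ) : ℝ)) =
      ∑ A ∈ BCT n δ B C, ∑ j ∈ side, ((A i0 j : ℕ) : ℝ) := by
    rw [Finset.sum_comm]
    rw [Finset.sum_congr rfl claimI, Finset.sum_const, hside, nsmul_eq_mul]
  set P := ∑ A ∈ BCT n δ B C, ((A i0 b0 : ℕ) : ℝ) with hPdef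
  have hPbound : |(n : ℝ) * P - (n : ℝ) * (B * C * Z)| ≤ ((m : ℝ) + 1) * Z := by
    have h1 : (n : ℝ) * P - (n : ℝ) * (B * C * Z) =
        ∑ A ∈ BCT n δ B C, ((∑ j ∈ side, ((A i0 j : ℕ) : ℝ)) - B * C * n) := by
      rw [Finset.sum_sub_distrib, ← hnP, Finset.sum_const, nsmul_eq_mul, ← hZdef]
      ring
    rw [h1]
    calc |∑ A ∈ BCT n δ B C, ((∑ j ∈ side, ((A i0 j : ℕ) : ℝ)) - B * C * n)| ≤
        ∑ A ∈ BCT n δ B C, |(∑ j ∈ side, ((A i0 j : ℕ) : ℝ)) - B * C * n| :=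
          Finset.abs_sum_le_sum_abs _ _
      _ ≤ ∑ _A ∈ BCT n δ B C, ((m : ℝ) + 1) :=
          Finset.sum_le_sum (fun A hA => (hSr A hA).1)
      _ = ((m : ℝ) + 1) * Z := by rw [Finset.sum_const, nsmul_eq_mul, ← hZdef]; ring
  have hmRpos : (1 : ℝ) ≤ (m : ℝ) := by exact_mod_cast hm1
  have hPZ : |P - B * C * Z| ≤ (2 * (m : ℝ) / n) * Z := by
    have h := divabs hnRpos hPbound
    calc |P - B * C * Z| ≤ ((m : ℝ) + 1) * Z / n := h
      _ ≤ 2 * (m : ℝ) * Z / n := by gcongr; linarith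
      _ = (2 * (m : ℝ) / n) * Z := by ring
  -- second moment
  have hperA : ∀ A ∈ BCT n δ B C,
      ∑ b ∈ side, ∑ c ∈ side.erase b, ((A i0 b : ℕ) : ℝ) * ((A i0 c : ℕ) : ℝ) =
      (∑ j ∈ side, ((A i0 j : ℕ) : ℝ)) ^ 2 - (∑ j ∈ side, ((A i0 j : ℕ) : ℝ)) := by
    intro A _
    have hxx : ∀ b : Fin (m + n), ((A i0 b : ℕ) : ℝ) * ((A i0 b : ℕ) : ℝ) = ((A i0 b : ℕ) : ℝ) := by
      intro b
      have := (A i0 b).isLt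
      have h01 : (A i0 b : ℕ) = 0 ∨ (A i0 b : ℕ) = 1 := by omega
      rcases h01 with h | h <;> rw [h] <;> norm_num
    have h1 : ∀ b ∈ side, ∑ c ∈ side.erase b, ((A i0 b : ℕ) : ℝ) * ((A i0 c : ℕ) : ℝ) =
        ((A i0 b : ℕ) : ℝ) * (∑ j ∈ side, ((A i0 j : ℕ) : ℝ)) - ((A i0 b : ℕ) : ℝ) := by
      intro b hb
      rw [← Finset.mul_sum, Finset.sum_erase_eq_sub hb, mul_sub, hxx]
    rw [Finset.sum_congr rfl h1, Finset.sum_sub_distrib, ← Finset.sum_mul]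
    ring
  have hnnpos : (0 : ℝ) < (n : ℝ) * ((n : ℝ) - 1) := by
    have : (2 : ℝ) ≤ (n : ℝ) := by exact_mod_cast hn2
    nlinarith
  have hnnR : (n : ℝ) * ((n : ℝ) - 1) *
      (∑ A ∈ BCT n δ B C, ((A i0 b0 : ℕ) : ℝ) * ((A i0 b1 : ℕ) : ℝ)) =
      ∑ A ∈ BCT n δ B C, ((∑ j ∈ side, ((A i0 j : ℕ) : ℝ)) ^ 2 -
        (∑ j ∈ side, ((A i0 j : ℕ) : ℝ))) := by
    have hsw : ∑ A ∈ BCT n δ B C, ∑ b ∈ side, ∑ c ∈ side.erase b,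
        ((A i0 b : ℕ) : ℝ) * ((A i0 c : ℕ) : ℝ) =
        ∑ b ∈ side, ∑ c ∈ side.erase b, ∑ A ∈ BCT n δ B C,
        ((A i0 b : ℕ) : ℝ) * ((A i0 c : ℕ) : ℝ) := by
      rw [Finset.sum_comm]
      exact Finset.sum_congr rfl (fun b _ => Finset.sum_comm)
    have h2 : ∀ b ∈ side, ∀ c ∈ side.erase b,
        ∑ A ∈ BCT n δ B C, ((A i0 b : ℕ) : ℝ) * ((A i0 c : ℕ) : ℝ) =
        ∑ A ∈ BCT n δ B C, ((A i0 b0 : ℕ) : ℝ) * ((A i0 b1 : ℕ) : ℝ) := by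
      intro b hb c hc
      exact claimII b hb c (Finset.mem_of_mem_erase hc)
        (Ne.symm (Finset.ne_of_mem_erase hc))
    have h4 : ∑ b ∈ side, ∑ c ∈ side.erase b, ∑ A ∈ BCT n δ B C,
        ((A i0 b : ℕ) : ℝ) * ((A i0 c : ℕ) : ℝ) =
        (n : ℝ) * ((n : ℝ) - 1) *
          (∑ A ∈ BCT n δ B C, ((A i0 b0 : ℕ) : ℝ) * ((A i0 b1 : ℕ) : ℝ)) := by
      rw [Finset.sum_congr rfl (fun b hb => Finset.sum_congr rfl (h2 b hb))]
      rw [Finset.sum_congr rfl (fun b hb => by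
        rw [Finset.sum_const, Finset.card_erase_of_mem hb, hside])]
      rw [Finset.sum_const, hside]
      rw [nsmul_eq_mul, nsmul_eq_mul, Nat.cast_sub (by omega : 1 ≤ n)]
      push_cast
      ring
    calc (n : ℝ) * ((n : ℝ) - 1) *
        (∑ A ∈ BCT n δ B C, ((A i0 b0 : ℕ) : ℝ) * ((A i0 b1 : ℕ) : ℝ))
        = ∑ b ∈ side, ∑ c ∈ side.erase b, ∑ A ∈ BCT n δ B C,
            ((A i0 b : ℕ) : ℝ) * ((A i0 c : ℕ) : ℝ) := h4.symm
      _ = ∑ A ∈ BCT n δ B C, ∑ b ∈ side, ∑ c ∈ side.erase b,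
            ((A i0 b : ℕ) : ℝ) * ((A i0 c : ℕ) : ℝ) := hsw.symm
      _ = ∑ A ∈ BCT n δ B C, ((∑ j ∈ side, ((A i0 j : ℕ) : ℝ)) ^ 2 -
            (∑ j ∈ side, ((A i0 j : ℕ) : ℝ))) := Finset.sum_congr rfl hperA
  have hn2R : (2 : ℝ) ≤ (n : ℝ) := by exact_mod_cast hn2
  have hSr2 : ∀ A ∈ BCT n δ B C,
      |(∑ j ∈ side, ((A i0 j : ℕ) : ℝ)) ^ 2 - (∑ j ∈ side, ((A i0 j : ℕ) : ℝ)) -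
        (B * C) ^ 2 * ((n : ℝ) * ((n : ℝ) - 1))| ≤ 6 * (n : ℝ) * (m : ℝ) := by
    intro A hA
    obtain ⟨h1, h2, h3⟩ := hSr A hA
    have habs := abs_le.mp h1
    have htn : B * C * (n : ℝ) ≤ (n : ℝ) := by nlinarith
    have hkey : (B * C * (n : ℝ)) ^ 2 - (∑ j ∈ side, ((A i0 j : ℕ) : ℝ)) ^ 2 ≤
        ((m : ℝ) + 1) * (2 * (n : ℝ)) := by nlinarith
    rw [abs_le]
    constructor <;> nlinarith
  have hRbound : |(n : ℝ) * ((n : ℝ) - 1) *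
      (∑ A ∈ BCT n δ B C, ((A i0 b0 : ℕ) : ℝ) * ((A i0 b1 : ℕ) : ℝ)) -
      (n : ℝ) * ((n : ℝ) - 1) * ((B * C) ^ 2 * Z)| ≤ 6 * (n : ℝ) * (m : ℝ) * Z := by
    have heq : (n : ℝ) * ((n : ℝ) - 1) *
        (∑ A ∈ BCT n δ B C, ((A i0 b0 : ℕ) : ℝ) * ((A i0 b1 : ℕ) : ℝ)) -
        (n : ℝ) * ((n : ℝ) - 1) * ((B * C) ^ 2 * Z) =
        ∑ A ∈ BCT n δ B C, ((∑ j ∈ side, ((A i0 j : ℕ) : ℝ)) ^ 2 -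
          (∑ j ∈ side, ((A i0 j : ℕ) : ℝ)) - (B * C) ^ 2 * ((n : ℝ) * ((n : ℝ) - 1))) := by
      rw [Finset.sum_sub_distrib, ← hnnR, Finset.sum_const, nsmul_eq_mul, ← hZdef]
      ring
    rw [heq]
    calc |∑ A ∈ BCT n δ B C, ((∑ j ∈ side, ((A i0 j : ℕ) : ℝ)) ^ 2 -
          (∑ j ∈ side, ((A i0 j : ℕ) : ℝ)) - (B * C) ^ 2 * ((n : ℝ) * ((n : ℝ) - 1)))| ≤
        ∑ A ∈ BCT n δ B C, |(∑ j ∈ side, ((A i0 j : ℕ) : ℝ)) ^ 2 -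
          (∑ j ∈ side, ((A i0 j : ℕ) : ℝ)) - (B * C) ^ 2 * ((n : ℝ) * ((n : ℝ) - 1))| :=
          Finset.abs_sum_le_sum_abs _ _
      _ ≤ ∑ _A ∈ BCT n δ B C, (6 * (n : ℝ) * (m : ℝ)) := Finset.sum_le_sum hSr2
      _ = 6 * (n : ℝ) * (m : ℝ) * Z := by rw [Finset.sum_const, nsmul_eq_mul, ← hZdef]; ring
  have hRZ : |(∑ A ∈ BCT n δ B C, ((A i0 b0 : ℕ) : ℝ) * ((A i0 b1 : ℕ) : ℝ)) -
      (B * C) ^ 2 * Z| ≤ 6 * (2 * (m : ℝ) / n) * Z := by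
    have h := divabs hnnpos hRbound
    have hcmp : 6 * (n : ℝ) * (m : ℝ) * Z / ((n : ℝ) * ((n : ℝ) - 1)) ≤
        6 * (2 * (m : ℝ) / n) * Z := by
      rw [div_le_iff₀ hnnpos]
      have hn0 : (n : ℝ) ≠ 0 := by positivity
      have hexp : 6 * (2 * (m : ℝ) / n) * Z * ((n : ℝ) * ((n : ℝ) - 1)) =
          12 * (m : ℝ) * Z * ((n : ℝ) - 1) := by
        field_simp; ring
      rw [hexp]
      nlinarith [mul_nonneg (mul_nonneg hZpos.le (by linarith : (0:ℝ) ≤ (m : ℝ)))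
        (by linarith : (0:ℝ) ≤ (n : ℝ) - 2)]
    exact le_trans h hcmp
  -- rewriting the statement's sums
  have hent0 : ∀ A : Fin (m + n) → Fin (m + n) → Fin 2, ent A 0 m = (A i0 b0 : ℕ) := by
    intro A
    rw [ent, dif_pos ⟨h0lt, hmlt⟩]
  have hent1 : ∀ A : Fin (m + n) → Fin (m + n) → Fin 2, ent A 0 (m + 1) = (A i0 b1 : ℕ) := by
    intro A
    rw [ent, dif_pos ⟨h0lt, hm1lt⟩]
  have hsum1 : ∑ A ∈ BCT n δ B C, ((ent A 0 m : ℝ) - B * C) ^ 2 =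
      (1 - 2 * (B * C)) * P + (B * C) ^ 2 * Z := by
    have hterm : ∀ A ∈ BCT n δ B C, ((ent A 0 m : ℝ) - B * C) ^ 2 =
        (1 - 2 * (B * C)) * ((A i0 b0 : ℕ) : ℝ) + (B * C) ^ 2 := by
      intro A _
      rw [hent0 A]
      have := (A i0 b0).isLt
      have h01 : (A i0 b0 : ℕ) = 0 ∨ (A i0 b0 : ℕ) = 1 := by omega
      rcases h01 with h | h <;> rw [h] <;> push_cast <;> ring
    rw [Finset.sum_congr rfl hterm, Finset.sum_add_distrib, ← Finset.mul_sum,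
      Finset.sum_const, nsmul_eq_mul, ← hZdef, ← hPdef]
    ring
  have hsum2 : ∑ A ∈ BCT n δ B C, (((ent A 0 m : ℝ) - B * C) * ((ent A 0 (m + 1) : ℝ) - B * C)) =
      (∑ A ∈ BCT n δ B C, ((A i0 b0 : ℕ) : ℝ) * ((A i0 b1 : ℕ) : ℝ)) -
        2 * (B * C) * P + (B * C) ^ 2 * Z := by
    have hterm : ∀ A ∈ BCT n δ B C,
        ((ent A 0 m : ℝ) - B * C) * ((ent A 0 (m + 1) : ℝ) - B * C) =
        ((A i0 b0 : ℕ) : ℝ) * ((A i0 b1 : ℕ) : ℝ) - B * C * ((A i0 b0 : ℕ) : ℝ) -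
          B * C * ((A i0 b1 : ℕ) : ℝ) + (B * C) ^ 2 := by
      intro A _
      rw [hent0 A, hent1 A]
      ring
    rw [Finset.sum_congr rfl hterm, Finset.sum_add_distrib, Finset.sum_sub_distrib,
      Finset.sum_sub_distrib, ← Finset.mul_sum, ← Finset.mul_sum,
      Finset.sum_const, nsmul_eq_mul, ← hZdef, claimI b1 hb1side, ← hPdef]
    ring
  -- final assembly
  obtain ⟨hA1, hA2⟩ := assemble (B * C) Z P
    (∑ A ∈ BCT n δ B C, ((A i0 b0 : ℕ) : ℝ) * ((A i0 b1 : ℕ) : ℝ))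
    (2 * (m : ℝ) / n) hZpos hq0 hq1 (by positivity) hPZ hRZ
  have hpow : (m : ℝ) / n ≤ (n : ℝ) ^ (δ - 1) := by
    have h2 : (n : ℝ) ^ (δ - 1) = (n : ℝ) ^ δ / (n : ℝ) := by
      rw [Real.rpow_sub hnRpos, Real.rpow_one]
    rw [h2]
    gcongr
  have hpownn : (0 : ℝ) ≤ (n : ℝ) ^ (δ - 1) := Real.rpow_nonneg (by positivity) _
  constructor
  · rw [hsum1]
    have hq : B * C - B ^ 2 * C ^ 2 = B * C - (B * C) ^ 2 := by ring
    rw [hq]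
    refine le_trans hA1 ?_
    have h6 : 3 * (2 * (m : ℝ) / n) = 6 * ((m : ℝ) / n) := by ring
    rw [h6]
    linarith
  · rw [hsum2]
    refine le_trans hA2 ?_
    have h8 : 8 * (2 * (m : ℝ) / n) = 16 * ((m : ℝ) / n) := by ring
    rw [h8]
    linarith

/-- Second-moment estimates in the proof of Theorem 1.5:
`E[(X̄_(1,n+1))²] = BC - B²C² + O(n^(δ-1) + n^(-δ/2+ε))` and
`E[X̄_(1,n+1) X̄_(1,n+2)] = O(n^(δ-1) + n^(-δ/2+ε))`, where `X̄ = X - BC`. -/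
theorem side_block_covariance_estimates
    (δ B C : ℝ) (hδ0 : 0 < δ) (hδ1 : δ ≤ 1 / 2) (hC0 : 0 < C) (hC1 : C < 3 / 4)
    (hB0 : 0 < B) (hB1 : B < 1 / (Real.sqrt (C / 3 - C ^ 2 / 3) + C))
    (hne : ∃ n₀ : ℕ, ∀ n : ℕ, n₀ ≤ n → (BCT n δ B C).Nonempty) :
    ∀ ε > (0 : ℝ), ∃ K > (0 : ℝ), ∃ n₁ : ℕ, ∀ n : ℕ, n₁ ≤ n →
      |(∑ A ∈ BCT n δ B C, ((ent A 0 ⌊(n : ℝ) ^ δ⌋₊ : ℝ) - B * C) ^ 2) /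
          ((BCT n δ B C).card : ℝ) - (B * C - B ^ 2 * C ^ 2)| ≤
        K * ((n : ℝ) ^ (δ - 1) + (n : ℝ) ^ (-δ / 2 + ε)) ∧
      |(∑ A ∈ BCT n δ B C, (((ent A 0 ⌊(n : ℝ) ^ δ⌋₊ : ℝ) - B * C) *
            ((ent A 0 (⌊(n : ℝ) ^ δ⌋₊ + 1) : ℝ) - B * C))) /
          ((BCT n δ B C).card : ℝ)| ≤
        K * ((n : ℝ) ^ (δ - 1) + (n : ℝ) ^ (-δ / 2 + ε)) := by
  intro ε hε
  obtain ⟨n₀, hn₀⟩ := hne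
  refine ⟨16, by norm_num, max n₀ 2, fun n hn => ?_⟩
  have hn2 : 2 ≤ n := le_trans (le_max_right _ _) hn
  have hq0 : 0 < B * C := mul_pos hB0 hC0
  have hq1 : B * C < 1 := by
    have hd : 0 < Real.sqrt (C / 3 - C ^ 2 / 3) + C := by positivity
    have h2 : B * (Real.sqrt (C / 3 - C ^ 2 / 3) + C) < 1 := (lt_div_iff₀ hd).mp hB1
    nlinarith [Real.sqrt_nonneg (C / 3 - C ^ 2 / 3)]
  have h1 := main_est n δ B C hq0 hq1 hδ0 (by linarith) hn2
    (hn₀ n (le_trans (le_max_left _ _) hn))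
  have hnRpos : (0 : ℝ) < (n : ℝ) := by
    have : (2 : ℝ) ≤ (n : ℝ) := by exact_mod_cast hn2
    linarith
  have hpow2 : (0 : ℝ) < (n : ℝ) ^ (-δ / 2 + ε) := Real.rpow_pos_of_pos hnRpos _
  constructor
  · refine le_trans h1.1 ?_
    linarith
  · refine le_trans h1.2 ?_
    linarith
end
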